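/- arXiv:1911.11936 — 3 statements merged into one kernel-verified Lean document; each statement's English description precedes it below -/
import Mathlib

section
/- Ω(nk/ε²) samples are necessary for learning on product distributions with finite marginal supports: there exist absolute constants c, c' > 0 such that for all positive integers n, k and all ε ∈ (0, 1/2), taking T = {0, ±1, …, ±k} and the hypothesis class H = {h^v : v ∈ {±1}^{n×k}} with h^v(t) = 1 if t has exactly one nonzero coordinate, namely coordinate i equal to v_{i,j}·j for some j ∈ [k], and h^v(t) = 0 otherwise, the following holds: for any (possibly randomized) learning algorithm A that maps N ≤ c·nk/ε² i.i.d. samples to a hypothesis in H, there exists v ∈ {±1}^{n×k} such that the expected additive error E_{s∼(D^v)^N}[Opt_H(D^v) − h^{A(s)}(D^v)] is at least c'·ε, where D^v is the product distribution whose i-th marginal puts mass 1−1/n on 0, mass (1+ε)/(2nk) on v_{i,j}·j and mass (1−ε)/(2nk) on −v_{i,j}·j for each j ∈ [k]. -/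
/-!
Assouad's method. The excess risk of `h^w` under `D^v` is `(1 - 1/n)^(n-1) · ε/(nk) · d_H(v, w)`,
so the expected excess risk of a learner is that constant times the sum, over the coordinates
`p = (i, j)`, of the probability that its output disagrees with `v` at `p`. Flipping `v` at `p`
only swaps the masses `(1 ± ε)/(2nk)` of the `i`-th marginal at `±(j+1)`, so the Bhattacharyya
affinity of one sample under the two distributions is at least `1 - ε²/(nk)`. It multiplies over
`N ≤ nk/(2ε²)` samples to at least `(1 - ε²/(nk))^N ≥ 1/2`; hence the two sample distributions
overlap in mass `≥ 1/8`, and the learner errs at `p` under `v` or under the flipped `v` with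
total probability `≥ 1/8`.
Averaging over all `v` and using `(1 - 1/n)^(n-1) ≥ 1/3` gives a `v` with risk `≥ ε/48`.
-/

/-- Sign encoding: `true ↦ +1`, `false ↦ −1`. -/
def sgn (b : Bool) : ℤ := if b then 1 else -1

/-- The hard hypothesis `h^v`: value `1` iff `t` has exactly one nonzero coordinate,
namely coordinate `i` equal to `v_{i,j} · j` for some `j ∈ [k]` (here `j ∈ Fin k`
encodes the value `j+1 ∈ {1,…,k}`). -/
noncomputable def hyp (n k : ℕ) (v : Fin n → Fin k → Bool) (t : Fin n → ℤ) : ℝ :=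
  open Classical in
  if (∃ i : Fin n, ∃ j : Fin k,
      (∀ i' : Fin n, i' ≠ i → t i' = 0) ∧ t i = sgn (v i j) * ((j : ℤ) + 1)) then 1 else 0

/-- The `i`-th marginal mass function of the hard distribution `D^v`:
mass `1 − 1/n` on `0`, mass `(1+ε)/(2nk)` on `v_{i,j}·j` and `(1−ε)/(2nk)` on `−v_{i,j}·j`. -/
noncomputable def marg (n k : ℕ) (ε : ℝ) (v : Fin n → Fin k → Bool) (i : Fin n) (x : ℤ) : ℝ :=
  if x = 0 then 1 - 1 / (n : ℝ)
  else if hx : 1 ≤ x.natAbs ∧ x.natAbs ≤ k then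
    (if (0 < x) = (v i ⟨x.natAbs - 1, by omega⟩ = true)
      then (1 + ε) / (2 * n * k) else (1 - ε) / (2 * n * k))
  else 0

/-- The support `T = {0, ±1, …, ±k}` as a finset of `ℤ`. -/
noncomputable def Tbox (k : ℕ) : Finset ℤ := Finset.Icc (-(k : ℤ)) k

/-- Expectation of `h` under the product distribution with marginal
mass functions `f i` supported on `{0,±1,…,±k}`. -/
noncomputable def expZ (n k : ℕ) (f : Fin n → ℤ → ℝ) (h : (Fin n → ℤ) → ℝ) : ℝ :=
  ∑ t ∈ Fintype.piFinset (fun _ : Fin n => Tbox k), (∏ i, f i (t i)) * h t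

/-- Probability mass of the sample tuple `s` under `N` i.i.d. draws from `D^v`. -/
noncomputable def sampleP (n k N : ℕ) (ε : ℝ) (v : Fin n → Fin k → Bool)
    (s : Fin N → Fin n → ℤ) : ℝ :=
  ∏ m : Fin N, ∏ i : Fin n, marg n k ε v i (s m i)

/-- The sample space: `N`-tuples of points of `{0,±1,…,±k}ⁿ`. -/
noncomputable def sampleBox (n k N : ℕ) : Finset (Fin N → Fin n → ℤ) :=
  Fintype.piFinset fun _ : Fin N => Fintype.piFinset fun _ : Fin n => Tbox k

/-- `Opt_H(D^v)`: the optimal expected value over the hypothesis class `H = {h^w}`. -/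
noncomputable def optZ (n k : ℕ) (ε : ℝ) (v : Fin n → Fin k → Bool) : ℝ :=
  ⨆ w : Fin n → Fin k → Bool, expZ n k (marg n k ε v) (hyp n k w)

/-- Hamming distance between `v` and `v'`. -/
def hamming {n k : ℕ} (v v' : Fin n → Fin k → Bool) : ℕ :=
  (Finset.univ.filter fun p : Fin n × Fin k => v p.1 p.2 ≠ v' p.1 p.2).card

open Finset Real

section Bhattacharyya

variable {α : Type*}

noncomputable def bhattacharyya (S : Finset α) (p q : α → ℝ) : ℝ :=
  ∑ x ∈ S, √(p x * q x)

lemma bhattacharyya_self {S : Finset α} {p : α → ℝ} (hp : ∀ x ∈ S, 0 ≤ p x) :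
    bhattacharyya S p p = ∑ x ∈ S, p x :=
  sum_congr rfl fun x hx => sqrt_mul_self (hp x hx)

/-- Cauchy–Schwarz applied to `√(pq) = √(min p q) · √(max p q)`. -/
lemma sq_bhattacharyya_le_two_mul_sum_min {S : Finset α} {p q : α → ℝ}
    (hp : ∀ x ∈ S, 0 ≤ p x) (hq : ∀ x ∈ S, 0 ≤ q x)
    (hp₁ : ∑ x ∈ S, p x ≤ 1) (hq₁ : ∑ x ∈ S, q x ≤ 1) :
    bhattacharyya S p q ^ 2 ≤ 2 * ∑ x ∈ S, min (p x) (q x) := by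
  have hmin : ∀ x ∈ S, 0 ≤ min (p x) (q x) := fun x hx => le_min (hp x hx) (hq x hx)
  have hmax : ∀ x ∈ S, 0 ≤ max (p x) (q x) := fun x hx => (hp x hx).trans (le_max_left _ _)
  have hsplit : bhattacharyya S p q = ∑ x ∈ S, √(min (p x) (q x)) * √(max (p x) (q x)) :=
    sum_congr rfl fun x hx => by rw [← sqrt_mul (hmin x hx), min_mul_max]
  have hsum_max : ∑ x ∈ S, max (p x) (q x) ≤ 2 := by
    calc ∑ x ∈ S, max (p x) (q x) ≤ ∑ x ∈ S, (p x + q x) :=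
          sum_le_sum fun x hx => max_le_add_of_nonneg (hp x hx) (hq x hx)
      _ ≤ 2 := by rw [sum_add_distrib]; linarith
  calc bhattacharyya S p q ^ 2
      ≤ (∑ x ∈ S, √(min (p x) (q x)) ^ 2) * ∑ x ∈ S, √(max (p x) (q x)) ^ 2 := by
        rw [hsplit]; exact sum_mul_sq_le_sq_mul_sq _ _ _
    _ = (∑ x ∈ S, min (p x) (q x)) * ∑ x ∈ S, max (p x) (q x) := by
        rw [sum_congr rfl fun x hx => sq_sqrt (hmin x hx),
          sum_congr rfl fun x hx => sq_sqrt (hmax x hx)]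
    _ ≤ 2 * ∑ x ∈ S, min (p x) (q x) := by
        rw [mul_comm]; exact mul_le_mul_of_nonneg_right hsum_max (sum_nonneg hmin)

lemma bhattacharyya_piFinset {ι : Type*} [Fintype ι] [DecidableEq ι] {S : ι → Finset α}
    {p q : ι → α → ℝ} (hp : ∀ i, ∀ x ∈ S i, 0 ≤ p i x) (hq : ∀ i, ∀ x ∈ S i, 0 ≤ q i x) :
    bhattacharyya (Fintype.piFinset S) (fun t => ∏ i, p i (t i)) (fun t => ∏ i, q i (t i)) =
      ∏ i, bhattacharyya (S i) (p i) (q i) := by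
  simp only [bhattacharyya]
  rw [prod_univ_sum]
  refine sum_congr rfl fun t ht => ?_
  have ht' := Fintype.mem_piFinset.mp ht
  rw [← prod_mul_distrib, sqrt_prod _ fun i _ => mul_nonneg (hp i _ (ht' i)) (hq i _ (ht' i))]

end Bhattacharyya

lemma sum_min_le_sum_mul_add_sum_mul {α : Type*} {S : Finset α} {P Q a b : α → ℝ}
    (ha : ∀ s ∈ S, 0 ≤ a s) (hb : ∀ s ∈ S, 0 ≤ b s) (hab : ∀ s ∈ S, a s + b s = 1) :
    ∑ s ∈ S, min (P s) (Q s) ≤ ∑ s ∈ S, P s * a s + ∑ s ∈ S, Q s * b s := by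
  rw [← sum_add_distrib]
  refine sum_le_sum fun s hs => ?_
  calc min (P s) (Q s) = min (P s) (Q s) * a s + min (P s) (Q s) * b s := by
        rw [← mul_add, hab s hs, mul_one]
    _ ≤ P s * a s + Q s * b s := by
        gcongr
        exacts [ha s hs, min_le_left _ _, hb s hs, min_le_right _ _]

lemma card_mul_le_two_mul_sum_of_involutive {α : Type*} [Fintype α] {σ : α → α}
    (hσ : Function.Involutive σ) {f : α → ℝ} {c : ℝ} (h : ∀ x, c ≤ f x + f (σ x)) :
    Fintype.card α * c ≤ 2 * ∑ x, f x := by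
  have hperm : ∑ x, f (σ x) = ∑ x, f x := Equiv.sum_comp (hσ.toPerm σ) f
  calc Fintype.card α * c = ∑ _x : α, c := by rw [sum_const, card_univ, nsmul_eq_mul]
    _ ≤ ∑ x, (f x + f (σ x)) := sum_le_sum fun x _ => h x
    _ = 2 * ∑ x, f x := by rw [sum_add_distrib, hperm, two_mul]

lemma one_third_le_one_sub_inv_pow {n : ℕ} (hn : n ≠ 0) :
    (1 / 3 : ℝ) ≤ (1 - 1 / n) ^ (n - 1) := by
  obtain ⟨m, rfl⟩ := Nat.exists_eq_succ_of_ne_zero hn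
  rcases Nat.eq_zero_or_pos m with rfl | hm
  · norm_num
  have hbase : (1 - 1 / (m.succ : ℝ)) = (1 + (m : ℝ)⁻¹)⁻¹ := by
    push_cast; field_simp; ring
  have hexp : (1 + (m : ℝ)⁻¹) ^ m ≤ 3 :=
    one_add_inv_pow_le_exp.trans (exp_one_lt_d9.le.trans (by norm_num))
  rw [Nat.succ_sub_one, hbase, inv_pow, one_div]
  exact inv_anti₀ (by positivity) hexp

section HardInstance

variable {n k : ℕ} {ε : ℝ}

lemma sgn_mul_succ_pos_iff (b : Bool) (j : ℕ) : 0 < sgn b * ((j : ℤ) + 1) ↔ b = true := by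
  cases b <;> simp [sgn]

lemma natAbs_sgn_mul_succ (b : Bool) (j : ℕ) : (sgn b * ((j : ℤ) + 1)).natAbs = j + 1 := by
  cases b <;> simp [sgn] <;> omega

lemma sgn_mul_succ_ne_zero (b : Bool) (j : ℕ) : sgn b * ((j : ℤ) + 1) ≠ 0 := by
  cases b <;> simp [sgn] <;> omega

lemma sum_Tbox (f : ℤ → ℝ) :
    ∑ x ∈ Tbox k, f x = f 0 + ∑ j : Fin k, ∑ b : Bool, f (sgn b * ((j : ℤ) + 1)) := by
  induction k with
  | zero => simp [Tbox]
  | succ k ih =>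
    have hTbox : Tbox (k + 1) = insert ((k : ℤ) + 1) (insert (-((k : ℤ) + 1)) (Tbox k)) := by
      ext x; simp only [Tbox, mem_Icc, mem_insert]; push_cast; omega
    have hk₁ : ((k : ℤ) + 1) ∉ insert (-((k : ℤ) + 1)) (Tbox k) := by
      simp only [mem_insert, Tbox, mem_Icc]; omega
    have hk₂ : -((k : ℤ) + 1) ∉ Tbox k := by simp only [Tbox, mem_Icc]; omega
    rw [hTbox, sum_insert hk₁, sum_insert hk₂, ih, Fin.sum_univ_castSucc]
    simp only [Fintype.sum_bool, sgn, ↓reduceIte, Bool.false_eq_true, Fin.val_castSucc,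
      Fin.val_last, one_mul, neg_one_mul]
    ring

lemma marg_zero (v : Fin n → Fin k → Bool) (i : Fin n) : marg n k ε v i 0 = 1 - 1 / n := by
  simp [marg]

lemma marg_sgn_mul (v : Fin n → Fin k → Bool) (i : Fin n) (b : Bool) (j : Fin k) :
    marg n k ε v i (sgn b * ((j : ℤ) + 1)) =
      if b = v i j then (1 + ε) / (2 * n * k) else (1 - ε) / (2 * n * k) := by
  have hne := sgn_mul_succ_ne_zero b j
  have habs := natAbs_sgn_mul_succ b j
  have hrange : 1 ≤ (sgn b * ((j : ℤ) + 1)).natAbs ∧ (sgn b * ((j : ℤ) + 1)).natAbs ≤ k := by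
    omega
  have hidx : (⟨(sgn b * ((j : ℤ) + 1)).natAbs - 1, by omega⟩ : Fin k) = j :=
    Fin.ext (by simp [habs])
  rw [marg, if_neg hne, dif_pos hrange, hidx]
  simp only [sgn_mul_succ_pos_iff]
  cases b <;> cases v i j <;> simp

lemma marg_congr_row {v v' : Fin n → Fin k → Bool} {i : Fin n} (h : v i = v' i) :
    marg n k ε v i = marg n k ε v' i := by
  funext x
  simp only [marg, h]

lemma marg_nonneg (hε : |ε| ≤ 1) (v : Fin n → Fin k → Bool) (i : Fin n) (x : ℤ) :
    0 ≤ marg n k ε v i x := by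
  obtain ⟨hε₀, hε₁⟩ := abs_le.mp hε
  have hn : 1 / (n : ℝ) ≤ 1 := by
    rcases Nat.eq_zero_or_pos n with rfl | hpos
    · simp
    · exact (div_le_one (by positivity)).mpr (by exact_mod_cast hpos)
  unfold marg
  split_ifs
  · linarith
  · exact div_nonneg (by linarith) (by positivity)
  · exact div_nonneg (by linarith) (by positivity)
  · exact le_rfl

lemma sum_marg_sgn_mul (v : Fin n → Fin k → Bool) (i : Fin n) (j : Fin k) :
    ∑ b : Bool, marg n k ε v i (sgn b * ((j : ℤ) + 1)) = 1 / (n * k) := by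
  simp only [Fintype.sum_bool, marg_sgn_mul]
  cases v i j <;> simp <;> ring

lemma sum_marg (hk : k ≠ 0) (v : Fin n → Fin k → Bool) (i : Fin n) :
    ∑ x ∈ Tbox k, marg n k ε v i x = 1 := by
  simp only [sum_Tbox, marg_zero, sum_marg_sgn_mul, sum_const, card_univ, Fintype.card_fin,
    nsmul_eq_mul]
  field_simp
  ring

end HardInstance

section Gap

variable {n k : ℕ} {ε : ℝ}

def supportPoint (w : Fin n → Fin k → Bool) (p : Fin n × Fin k) : Fin n → ℤ :=
  Pi.single p.1 (sgn (w p.1 p.2) * ((p.2 : ℤ) + 1))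

lemma supportPoint_injective (w : Fin n → Fin k → Bool) : Function.Injective (supportPoint w) := by
  rintro ⟨i, j⟩ ⟨i', j'⟩ h
  have hi : i = i' := by
    by_contra hne
    have := congrFun h i
    simp only [supportPoint, Pi.single_eq_same, Pi.single_eq_of_ne hne] at this
    exact sgn_mul_succ_ne_zero _ _ this
  subst hi
  have habs := congrArg Int.natAbs (congrFun h i)
  simp only [supportPoint, Pi.single_eq_same, natAbs_sgn_mul_succ, add_left_inj] at habs
  exact Prod.ext rfl (Fin.ext habs)

lemma supportPoint_mem_piFinset (w : Fin n → Fin k → Bool) (p : Fin n × Fin k) :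
    supportPoint w p ∈ Fintype.piFinset fun _ => Tbox k := by
  refine Fintype.mem_piFinset.mpr fun i => ?_
  have hj := p.2.isLt
  by_cases hi : i = p.1
  · subst hi
    simp only [supportPoint, Pi.single_eq_same, Tbox, mem_Icc]
    cases w p.1 p.2 <;> simp [sgn] <;> omega
  · simp [supportPoint, Pi.single_eq_of_ne hi, Tbox]

lemma hyp_eq_ite (w : Fin n → Fin k → Bool) (t : Fin n → ℤ) :
    hyp n k w t = if t ∈ Set.range (supportPoint w) then 1 else 0 := by
  classical
  unfold hyp
  congr 1
  refine propext ⟨fun ⟨i, j, hzero, hi⟩ => ⟨(i, j), ?_⟩, fun ⟨p, hp⟩ => ⟨p.1, p.2, ?_, ?_⟩⟩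
  · funext i'
    by_cases h : i' = i
    · subst h; simp [supportPoint, hi]
    · simp [supportPoint, Pi.single_eq_of_ne h, hzero i' h]
  · intro i' h; simp [← hp, supportPoint, Pi.single_eq_of_ne h]
  · simp [← hp, supportPoint]

lemma expZ_hyp (f : Fin n → ℤ → ℝ) (w : Fin n → Fin k → Bool) :
    expZ n k f (hyp n k w) = ∑ p : Fin n × Fin k, ∏ i, f i (supportPoint w p i) := by
  classical
  have hfilter : (Fintype.piFinset fun _ : Fin n => Tbox k).filter
      (· ∈ Set.range (supportPoint w)) = univ.image (supportPoint w) := by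
    ext t
    simp only [mem_filter, mem_image, mem_univ, true_and, Set.mem_range]
    exact ⟨fun h => h.2, fun ⟨p, hp⟩ => ⟨hp ▸ supportPoint_mem_piFinset w p, p, hp⟩⟩
  simp only [expZ, hyp_eq_ite, mul_ite, mul_one, mul_zero]
  rw [← sum_filter, hfilter, sum_image fun p _ q _ h => supportPoint_injective w h]

lemma prod_marg_supportPoint (v w : Fin n → Fin k → Bool) (p : Fin n × Fin k) :
    ∏ i, marg n k ε v i (supportPoint w p i) =
      (1 - 1 / n) ^ (n - 1) * marg n k ε v p.1 (sgn (w p.1 p.2) * ((p.2 : ℤ) + 1)) := by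
  classical
  rw [Fintype.prod_eq_mul_prod_compl p.1, mul_comm]
  congr 1
  · rw [prod_congr rfl fun i hi => by
      rw [supportPoint, Pi.single_eq_of_ne (mem_compl.mp hi ∘ mem_singleton.mpr), marg_zero]]
    rw [prod_const, card_compl, card_singleton, Fintype.card_fin]
  · simp [supportPoint]

lemma expZ_marg_hyp (v w : Fin n → Fin k → Bool) :
    expZ n k (marg n k ε v) (hyp n k w) = (1 - 1 / n) ^ (n - 1) *
      ∑ p : Fin n × Fin k,
        if w p.1 p.2 = v p.1 p.2 then (1 + ε) / (2 * n * k) else (1 - ε) / (2 * n * k) := by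
  simp only [expZ_hyp, prod_marg_supportPoint, marg_sgn_mul, mul_sum]

lemma expZ_marg_hyp_sub (v w : Fin n → Fin k → Bool) :
    expZ n k (marg n k ε v) (hyp n k v) - expZ n k (marg n k ε v) (hyp n k w) =
      (1 - 1 / n) ^ (n - 1) * (ε / (n * k)) * hamming v w := by
  classical
  rw [expZ_marg_hyp, expZ_marg_hyp, ← mul_sub, ← sum_sub_distrib, hamming,
    natCast_card_filter (R := ℝ), mul_sum, mul_sum]
  refine sum_congr rfl fun p _ => ?_
  by_cases h : v p.1 p.2 = w p.1 p.2
  · simp [h]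
  · simp only [↓reduceIte, if_neg (Ne.symm h), if_pos h]
    ring

lemma one_sub_inv_pow_nonneg (n : ℕ) : (0 : ℝ) ≤ (1 - 1 / n) ^ (n - 1) := by
  rcases Nat.eq_zero_or_pos n with rfl | hn
  · simp
  · exact (one_third_le_one_sub_inv_pow hn.ne').trans' (by norm_num)

lemma optZ_sub_expZ_marg_hyp (hε : 0 ≤ ε) (v w : Fin n → Fin k → Bool) :
    optZ n k ε v - expZ n k (marg n k ε v) (hyp n k w) =
      (1 - 1 / n) ^ (n - 1) * (ε / (n * k)) * hamming v w := by
  have hgap w := expZ_marg_hyp_sub (ε := ε) v w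
  have hopt : optZ n k ε v = expZ n k (marg n k ε v) (hyp n k v) := by
    refine le_antisymm (ciSup_le fun w => ?_)
      (le_ciSup (f := fun w => expZ n k (marg n k ε v) (hyp n k w)) (Set.finite_range _).bddAbove v)
    have : 0 ≤ (1 - 1 / n) ^ (n - 1) * (ε / (n * k)) * (hamming v w : ℝ) := by
      have := one_sub_inv_pow_nonneg n
      positivity
    linarith [hgap w]
  rw [hopt, hgap]

end Gap

section Sampling

variable {n k N : ℕ} {ε : ℝ}

lemma sampleP_nonneg (hε : |ε| ≤ 1) (v : Fin n → Fin k → Bool) (s : Fin N → Fin n → ℤ) :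
    0 ≤ sampleP n k N ε v s :=
  prod_nonneg fun m _ => prod_nonneg fun i _ => marg_nonneg hε v i (s m i)

lemma sum_sampleP (hk : k ≠ 0) (v : Fin n → Fin k → Bool) :
    ∑ s ∈ sampleBox n k N, sampleP n k N ε v s = 1 := by
  unfold sampleBox sampleP
  rw [← prod_univ_sum (fun _ : Fin N => Fintype.piFinset fun _ : Fin n => Tbox k)
    (fun _ u => ∏ i, marg n k ε v i (u i))]
  refine prod_eq_one fun m _ => ?_
  rw [← prod_univ_sum (fun _ : Fin n => Tbox k) (marg n k ε v)]
  exact prod_eq_one fun i _ => sum_marg hk v i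

lemma bhattacharyya_sampleP (hε : |ε| ≤ 1) (v v' : Fin n → Fin k → Bool) :
    bhattacharyya (sampleBox n k N) (sampleP n k N ε v) (sampleP n k N ε v') =
      (∏ i, bhattacharyya (Tbox k) (marg n k ε v i) (marg n k ε v' i)) ^ N := by
  have hrow (u : Fin n → Fin k → Bool) : ∀ m : Fin N, ∀ t ∈ Fintype.piFinset fun _ => Tbox k,
      0 ≤ ∏ i, marg n k ε u i (t i) :=
    fun _ t _ => prod_nonneg fun i _ => marg_nonneg hε u i (t i)
  unfold sampleBox sampleP
  rw [bhattacharyya_piFinset (hrow v) (hrow v'),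
    bhattacharyya_piFinset (fun _ x _ => marg_nonneg hε v _ x) (fun _ x _ => marg_nonneg hε v' _ x),
    prod_const, card_univ, Fintype.card_fin]

end Sampling

section Flip

variable {n k : ℕ} {ε : ℝ}

def flipAt (v : Fin n → Fin k → Bool) (p : Fin n × Fin k) : Fin n → Fin k → Bool :=
  fun i j => if (i, j) = p then !v i j else v i j

lemma flipAt_involutive (p : Fin n × Fin k) : Function.Involutive (flipAt · p) := by
  intro v
  funext i j
  simp only [flipAt]
  split_ifs <;> simp

lemma flipAt_apply_self (v : Fin n → Fin k → Bool) (p : Fin n × Fin k) :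
    flipAt v p p.1 p.2 = !v p.1 p.2 := by
  simp [flipAt]

lemma flipAt_of_ne (v : Fin n → Fin k → Bool) {p : Fin n × Fin k} {i : Fin n} {j : Fin k}
    (h : (i, j) ≠ p) : flipAt v p i j = v i j := by
  simp [flipAt, h]

lemma one_sub_sq_div_le_sqrt_mul (hε : |ε| ≤ 1) (d : ℝ) :
    (1 - ε ^ 2) / d ≤ √((1 + ε) / d * ((1 - ε) / d)) := by
  have hsq : 0 ≤ 1 - ε ^ 2 := by nlinarith [abs_le.mp hε, sq_abs ε, abs_nonneg ε]
  rw [show (1 + ε) / d * ((1 - ε) / d) = (1 - ε ^ 2) / d ^ 2 by ring]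
  refine le_sqrt_of_sq_le ?_
  rw [div_pow]
  exact div_le_div_of_nonneg_right (by nlinarith) (sq_nonneg d)

lemma bhattacharyya_marg_flipAt (hε : |ε| ≤ 1) (v : Fin n → Fin k → Bool) (p : Fin n × Fin k) :
    1 - ε ^ 2 / (n * k) ≤
      bhattacharyya (Tbox k) (marg n k ε v p.1) (marg n k ε (flipAt v p) p.1) := by
  have hn : (n : ℝ) ≠ 0 := Nat.cast_ne_zero.mpr p.1.pos.ne'
  have hk : (k : ℝ) ≠ 0 := Nat.cast_ne_zero.mpr p.2.pos.ne'
  have hcol (j : Fin k) : (1 - if j = p.2 then ε ^ 2 else 0) / (n * k) ≤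
      ∑ b : Bool, √(marg n k ε v p.1 (sgn b * ((j : ℤ) + 1)) *
        marg n k ε (flipAt v p) p.1 (sgn b * ((j : ℤ) + 1))) := by
    by_cases hj : j = p.2
    · subst hj
      have hsqrt := one_sub_sq_div_le_sqrt_mul hε (2 * n * k)
      simp only [Fintype.sum_bool, marg_sgn_mul, flipAt_apply_self]
      cases v p.1 p.2 <;> simp only [Bool.not_true, Bool.not_false, ↓reduceIte,
        Bool.false_eq_true, Bool.true_eq_false, mul_comm ((1 - ε) / _)] <;>
        linarith [show (1 - ε ^ 2) / (n * k) = 2 * ((1 - ε ^ 2) / (2 * n * k)) by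
          field_simp]
    · rw [if_neg hj, sub_zero, ← sum_marg_sgn_mul (ε := ε) v p.1 j]
      refine sum_le_sum fun b _ => ?_
      have hflip : marg n k ε (flipAt v p) p.1 (sgn b * ((j : ℤ) + 1)) =
          marg n k ε v p.1 (sgn b * ((j : ℤ) + 1)) := by
        rw [marg_sgn_mul, marg_sgn_mul, flipAt_of_ne v fun h => hj (congrArg Prod.snd h)]
      rw [hflip, sqrt_mul_self (marg_nonneg hε v _ _)]
  have hzero : √(marg n k ε v p.1 0 * marg n k ε (flipAt v p) p.1 0) = 1 - 1 / n := by
    rw [marg_zero, marg_zero, sqrt_mul_self]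
    linarith [marg_zero (ε := ε) v p.1 ▸ marg_nonneg hε v p.1 0]
  calc 1 - ε ^ 2 / (n * k)
      = (1 - 1 / n) + ∑ j : Fin k, (1 - if j = p.2 then ε ^ 2 else 0) / (n * k) := by
        simp only [← sum_div, sum_sub_distrib, sum_ite_eq', mem_univ, ↓reduceIte, sum_const,
          card_univ, Fintype.card_fin, nsmul_eq_mul, mul_one]
        field_simp
        ring
    _ ≤ bhattacharyya (Tbox k) (marg n k ε v p.1) (marg n k ε (flipAt v p) p.1) := by
        rw [bhattacharyya, sum_Tbox, hzero]
        gcongr with j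
        exact hcol j

end Flip

section Assouad

variable {n k N : ℕ} {ε : ℝ}

lemma sq_div_natCast_mul_le_one (hε : |ε| ≤ 1) (p : Fin n × Fin k) : ε ^ 2 / (n * k) ≤ 1 := by
  have hnk : (1 : ℝ) ≤ n * k := by
    have := p.1.pos; have := p.2.pos
    exact_mod_cast Nat.one_le_iff_ne_zero.mpr (by positivity)
  exact div_le_one_of_le₀ (((sq_le_one_iff_abs_le_one ε).mpr hε).trans hnk) (by positivity)

lemma bhattacharyya_sampleP_flipAt (hε : |ε| ≤ 1) (v : Fin n → Fin k → Bool)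
    (p : Fin n × Fin k) :
    (1 - ε ^ 2 / (n * k)) ^ N ≤
      bhattacharyya (sampleBox n k N) (sampleP n k N ε v) (sampleP n k N ε (flipAt v p)) := by
  have hk : k ≠ 0 := p.2.pos.ne'
  have hother : ∀ i ≠ p.1,
      bhattacharyya (Tbox k) (marg n k ε v i) (marg n k ε (flipAt v p) i) = 1 := by
    intro i hi
    have hrow : flipAt v p i = v i :=
      funext fun j => flipAt_of_ne v fun h => hi (congrArg Prod.fst h)
    rw [marg_congr_row hrow, bhattacharyya_self fun x _ => marg_nonneg hε v i x, sum_marg hk]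
  rw [bhattacharyya_sampleP hε, Fintype.prod_eq_single p.1 hother]
  exact pow_le_pow_left₀ (by linarith [sq_div_natCast_mul_le_one hε p])
    (bhattacharyya_marg_flipAt hε v p) N

lemma one_eighth_le_sum_min_sampleP_flipAt (hε : |ε| ≤ 1) (hN : 2 * N * ε ^ 2 ≤ n * k)
    (v : Fin n → Fin k → Bool) (p : Fin n × Fin k) :
    1 / 8 ≤ ∑ s ∈ sampleBox n k N, min (sampleP n k N ε v s) (sampleP n k N ε (flipAt v p) s) := by
  have hnk : (0 : ℝ) < n * k := by
    have := p.1.pos; have := p.2.pos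
    positivity
  have hbernoulli : 1 / 2 ≤ (1 - ε ^ 2 / (n * k)) ^ N := by
    have hNratio : N * (ε ^ 2 / (n * k)) ≤ 1 / 2 := by
      rw [mul_div_assoc', div_le_iff₀ hnk]
      linarith
    have := one_add_mul_le_pow (a := -(ε ^ 2 / (n * k)))
      (by linarith [sq_div_natCast_mul_le_one hε p]) N
    rw [mul_neg, ← sub_eq_add_neg, ← sub_eq_add_neg] at this
    linarith
  have hsq := sq_bhattacharyya_le_two_mul_sum_min
    (fun s _ => sampleP_nonneg hε v s) (fun s _ => sampleP_nonneg hε (flipAt v p) s)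
    (sum_sampleP (N := N) p.2.pos.ne' v).le (sum_sampleP p.2.pos.ne' (flipAt v p)).le
  nlinarith [hbernoulli.trans (bhattacharyya_sampleP_flipAt hε v p (N := N))]

end Assouad

section Learner

variable {n k N : ℕ} {ε : ℝ}

noncomputable def errorProb (A : (Fin N → Fin n → ℤ) → (Fin n → Fin k → Bool) → ℝ) (ε : ℝ)
    (v : Fin n → Fin k → Bool) (p : Fin n × Fin k) : ℝ :=
  ∑ s ∈ sampleBox n k N, sampleP n k N ε v s *
    ∑ w, A s w * if v p.1 p.2 ≠ w p.1 p.2 then 1 else 0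

noncomputable def excessRisk (A : (Fin N → Fin n → ℤ) → (Fin n → Fin k → Bool) → ℝ) (ε : ℝ)
    (v : Fin n → Fin k → Bool) : ℝ :=
  ∑ s ∈ sampleBox n k N, sampleP n k N ε v s *
    ∑ w, A s w * (optZ n k ε v - expZ n k (marg n k ε v) (hyp n k w))

variable {A : (Fin N → Fin n → ℤ) → (Fin n → Fin k → Bool) → ℝ}

lemma excessRisk_eq (hε : 0 ≤ ε) (v : Fin n → Fin k → Bool) :
    excessRisk A ε v = (1 - 1 / n) ^ (n - 1) * (ε / (n * k)) * ∑ p, errorProb A ε v p := by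
  classical
  simp only [excessRisk, errorProb, optZ_sub_expZ_marg_hyp hε, hamming,
    natCast_card_filter (R := ℝ), mul_sum]
  refine (sum_congr rfl fun s _ => sum_comm).trans <| sum_comm.trans <|
    sum_congr rfl fun p _ => sum_congr rfl fun s _ => sum_congr rfl fun w _ => ?_
  ring

lemma errorProb_add_errorProb_flipAt (hA₀ : ∀ s w, 0 ≤ A s w) (hA₁ : ∀ s, ∑ w, A s w = 1)
    (hε : |ε| ≤ 1) (hN : 2 * N * ε ^ 2 ≤ n * k) (v : Fin n → Fin k → Bool) (p : Fin n × Fin k) :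
    1 / 8 ≤ errorProb A ε v p + errorProb A ε (flipAt v p) p := by
  have hindicator (s) : (∑ w, A s w * if v p.1 p.2 ≠ w p.1 p.2 then 1 else 0) +
      (∑ w, A s w * if flipAt v p p.1 p.2 ≠ w p.1 p.2 then 1 else 0) = 1 := by
    rw [← sum_add_distrib]
    refine (sum_congr rfl fun w _ => ?_).trans (hA₁ s)
    rw [flipAt_apply_self]
    cases v p.1 p.2 <;> cases w p.1 p.2 <;> simp
  exact (one_eighth_le_sum_min_sampleP_flipAt hε hN v p).trans
    (sum_min_le_sum_mul_add_sum_mul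
      (fun s _ => sum_nonneg fun w _ => mul_nonneg (hA₀ s w) (by positivity))
      (fun s _ => sum_nonneg fun w _ => mul_nonneg (hA₀ s w) (by positivity))
      (fun s _ => hindicator s))

lemma exists_excessRisk_ge (hA₀ : ∀ s w, 0 ≤ A s w) (hA₁ : ∀ s, ∑ w, A s w = 1)
    (hn : n ≠ 0) (hk : k ≠ 0) (hε₀ : 0 ≤ ε) (hε₁ : ε ≤ 1) (hN : 2 * N * ε ^ 2 ≤ n * k) :
    ∃ v, 1 / 48 * ε ≤ excessRisk A ε v := by
  have hε : |ε| ≤ 1 := abs_le.mpr ⟨by linarith, hε₁⟩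
  set M : ℝ := (Fintype.card (Fin n → Fin k → Bool) : ℝ)
  have hcoord (p : Fin n × Fin k) : M * (1 / 8) ≤ 2 * ∑ v, errorProb A ε v p :=
    card_mul_le_two_mul_sum_of_involutive (flipAt_involutive p)
      (errorProb_add_errorProb_flipAt hA₀ hA₁ hε hN · p)
  have htotal : ∑ _v : Fin n → Fin k → Bool, 1 / 48 * ε ≤ ∑ v, excessRisk A ε v := by
    calc ∑ _v : Fin n → Fin k → Bool, 1 / 48 * ε
        = 1 / 3 * (ε / (n * k)) * ∑ _p : Fin n × Fin k, M / 16 := by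
          simp only [sum_const, card_univ, Fintype.card_prod, Fintype.card_fin, nsmul_eq_mul]
          push_cast
          field_simp
          ring
      _ ≤ (1 - 1 / n) ^ (n - 1) * (ε / (n * k)) * ∑ p, ∑ v, errorProb A ε v p := by
          have hC := one_third_le_one_sub_inv_pow hn
          refine mul_le_mul (by gcongr) (sum_le_sum fun p _ => by linarith [hcoord p])
            (by positivity) (mul_nonneg (by linarith) (by positivity))
      _ = ∑ v, excessRisk A ε v := by
          simp only [excessRisk_eq hε₀, ← mul_sum]
          rw [sum_comm]
  obtain ⟨v, -, hv⟩ := exists_le_of_sum_le univ_nonempty htotal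
  exact ⟨v, hv⟩

end Learner

theorem stmt1 :
    ∃ c c' : ℝ, 0 < c ∧ 0 < c' ∧
      ∀ n k : ℕ, 1 ≤ n → 1 ≤ k →
      ∀ ε : ℝ, ε ∈ Set.Ioo (0 : ℝ) (1 / 2) →
      ∀ N : ℕ, (N : ℝ) ≤ c * (n * k : ℝ) / ε ^ 2 →
      ∀ A : (Fin N → Fin n → ℤ) → (Fin n → Fin k → Bool) → ℝ,
        (∀ s, (∀ w, 0 ≤ A s w) ∧ ∑ w : Fin n → Fin k → Bool, A s w = 1) →
        ∃ v : Fin n → Fin k → Bool,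
          c' * ε ≤
            ∑ s ∈ sampleBox n k N, sampleP n k N ε v s *
              ∑ w : Fin n → Fin k → Bool,
                A s w * (optZ n k ε v - expZ n k (marg n k ε v) (hyp n k w)) := by
  refine ⟨1 / 2, 1 / 48, by norm_num, by norm_num, fun n k hn hk ε ⟨hε₀, hε₁⟩ N hN A hA => ?_⟩
  have hN' : 2 * N * ε ^ 2 ≤ n * k := by
    rw [le_div_iff₀ (by positivity)] at hN
    linarith
  exact exists_excessRisk_ge (fun s => (hA s).1) (fun s => (hA s).2) (by omega) (by omega)
    hε₀.le (by linarith) hN'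
end

section
/- The prophet inequality problem is strongly monotone: for any two product distributions D = D_1×…×D_n and D̃ = D̃_1×…×D̃_n on [0,1]^n with D ⪰ D̃ (coordinatewise first-order stochastic dominance), the backward-induction optimal thresholds θ̃ for D̃ satisfy E_{t∼D}[h_{θ̃}(t)] ≥ E_{t∼D̃}[h_{θ̃}(t)], and the right-hand side equals the optimal expected reward achievable by any stopping strategy on D̃. -/
open MeasureTheory ProbabilityTheory
open scoped NNReal ENNReal

/-- Expected value `h(D) = E_{t∼D}[h(t)]` of a hypothesis under the product
distribution with marginals `μ i`. -/
noncomputable def expVal {n : ℕ} (h : (Fin n → ℝ) → ℝ) (μ : Fin n → Measure ℝ) : ℝ :=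
  ∫ t, h t ∂(Measure.pi μ)

/-- A distribution on `ℝ` supported on `[0,1]`. -/
def SuppIn01 (μ : Measure ℝ) : Prop := μ (Set.Icc (0 : ℝ) 1)ᶜ = 0

/-- `Opt(D) = sup_{h ∈ H} h(D)`. -/
noncomputable def Opt {n : ℕ} (H : Set ((Fin n → ℝ) → ℝ)) (μ : Fin n → Measure ℝ) : ℝ :=
  ⨆ h : H, expVal (h : (Fin n → ℝ) → ℝ) μ

/-- Coordinatewise first-order stochastic dominance `P ⪰ Q`:
`F_{P_i}(t) ≤ F_{Q_i}(t)` for every `i` and `t`. -/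
def StochDom {n : ℕ} (P Q : Fin n → Measure ℝ) : Prop :=
  ∀ (i : Fin n) (t : ℝ), cdf (P i) t ≤ cdf (Q i) t

/-- Strong monotonicity of a problem `H`: for every product distribution `D̃`
(on `[0,1]ⁿ`) there is an optimal hypothesis `h_{D̃}` whose expected value on any
product distribution `D ⪰ D̃` is at least `Opt(D̃)`. -/
def StronglyMonotone {n : ℕ} (H : Set ((Fin n → ℝ) → ℝ)) : Prop :=
  ∀ Dt : Fin n → Measure ℝ, (∀ i, IsProbabilityMeasure (Dt i)) → (∀ i, SuppIn01 (Dt i)) →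
    ∃ h ∈ H, expVal h Dt = Opt H Dt ∧
      ∀ D : Fin n → Measure ℝ, (∀ i, IsProbabilityMeasure (D i)) → (∀ i, SuppIn01 (D i)) →
        StochDom D Dt → Opt H Dt ≤ expVal h D

/-- The marginal empirical measure: the uniform distribution over the `i`-th
coordinates of the samples `s`. -/
noncomputable def empMeas {N n : ℕ} (s : Fin N → Fin n → ℝ) (i : Fin n) : Measure ℝ :=
  ((N : ℝ≥0)⁻¹ : ℝ≥0) • ∑ m : Fin N, Measure.dirac (s m i)

/-- Expectation of `h` under the *product empirical distribution* `E = E_1 × ⋯ × E_n`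
determined by the samples `s` (written directly as a finite average over all
combinations of sample coordinates). -/
noncomputable def empExp {N n : ℕ} (s : Fin N → Fin n → ℝ) (h : (Fin n → ℝ) → ℝ) : ℝ :=
  (∑ m : Fin n → Fin N, h fun i => s (m i) i) / (N ^ n : ℕ)

/-- `Opt(E)` for the product empirical distribution of the samples `s`. -/
noncomputable def empOpt {N n : ℕ} (H : Set ((Fin n → ℝ) → ℝ)) (s : Fin N → Fin n → ℝ) : ℝ :=
  ⨆ h : H, empExp s (h : (Fin n → ℝ) → ℝ)

/-- The empirical CDF `F_{E_i}(t) = #{m : s_i^{(m)} ≤ t} / N`. -/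
noncomputable def empCdf {N n : ℕ} (s : Fin N → Fin n → ℝ) (i : Fin n) (t : ℝ) : ℝ :=
  ((Finset.univ.filter fun m : Fin N => s m i ≤ t).card : ℝ) / N

/-- Total variation distance between two measures. -/
noncomputable def tvDist {α : Type*} [MeasurableSpace α] (P Q : Measure α) : ℝ :=
  ⨆ A : {A : Set α // MeasurableSet A}, ((P A).toReal - (Q A).toReal)

/-- Squared Hellinger distance `H²(P,Q) = 1 − ∫ √(dP/dλ · dQ/dλ) dλ` (`λ = P + Q`). -/
noncomputable def sqHellinger {α : Type*} [MeasurableSpace α] (P Q : Measure α) : ℝ :=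
  1 - ∫ x, Real.sqrt ((P.rnDeriv (P + Q) x).toReal * (Q.rnDeriv (P + Q) x).toReal) ∂(P + Q)

/-- The measure of i.i.d. samples: `N` independent draws from the product
distribution with marginals `μ`. -/
noncomputable def samples (N : ℕ) {n : ℕ} (μ : Fin n → Measure ℝ) :
    Measure (Fin N → Fin n → ℝ) :=
  Measure.pi fun _ : Fin N => Measure.pi μ

/-- The reward of the threshold strategy `θ` on realization `t`, starting from
position `j`: it accepts the first reward `t i ≥ θ i` among positions `i < n−1`,
and accepts the last reward if it reaches it. -/
noncomputable def prophetAux {n : ℕ} (θ t : Fin n → ℝ) : ℕ → ℝ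
  | j =>
    if h : j < n then
      if j = n - 1 then t ⟨j, h⟩
      else if θ ⟨j, h⟩ ≤ t ⟨j, h⟩ then t ⟨j, h⟩
      else prophetAux θ t (j + 1)
    else 0
  termination_by j => n - j
  decreasing_by omega

/-- The reward `h_θ(t)` of the threshold strategy `θ` on realization `t`. -/
noncomputable def prophetReward {n : ℕ} (θ t : Fin n → ℝ) : ℝ := prophetAux θ t 0

/-- The optimal (backward-induction) value of the prophet game on the suffix
`μ_j × ⋯ × μ_{n−1}`: `V j = E_{x ∼ μ_j}[max(x, V (j+1))]`, `V n = 0`. -/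
noncomputable def suffixValue {n : ℕ} (μ : Fin n → Measure ℝ) : ℕ → ℝ
  | j =>
    if h : j < n then ∫ x, max x (suffixValue μ (j + 1)) ∂(μ ⟨j, h⟩)
    else 0
  termination_by j => n - j
  decreasing_by omega

/-- The backward-induction optimal thresholds for the product distribution `μ`:
`θ_{n−1} = 0` and `θ_i` is the optimal expected reward on the suffix after `i`. -/
noncomputable def optThresholds {n : ℕ} (μ : Fin n → Measure ℝ) : Fin n → ℝ :=
  fun i => if (i : ℕ) = n - 1 then 0 else suffixValue μ ((i : ℕ) + 1)

/-- A nonanticipating stopping rule: its decision depends only on the rewards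
observed up to the stopping time. -/
def Nonanticipating {n : ℕ} (τ : (Fin n → ℝ) → Fin n) : Prop :=
  ∀ t t' : Fin n → ℝ, (∀ j : Fin n, j ≤ τ t → t j = t' j) → τ t' = τ t

/-- The optimal expected reward over all (adaptive, nonanticipating) stopping
strategies for the product distribution `μ`. -/
noncomputable def optStopValue {n : ℕ} (μ : Fin n → Measure ℝ) : ℝ :=
  ⨆ τ : {τ : (Fin n → ℝ) → Fin n // Nonanticipating τ},
    ∫ t, t ((τ : (Fin n → ℝ) → Fin n) t) ∂(Measure.pi μ)

/-!
Write `V j` for the backward-induction value of the game on positions `j, …, n - 1`, so that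
`θ̃ j = V (j + 1)`. Conditioning on the reward at position `j`, the threshold strategy earns from
`j` on `E_{x ∼ μ_j}[x if x ≥ θ̃ j, else its expected reward from j + 1]`. Under `D̃` this is
`E_{x ∼ D̃_j}[max x (V (j + 1))] = V j`. Under `D`, by induction the continuation is at least
`V (j + 1)`, so the reward is at least
`E_{x ∼ D_j}[max x (V (j + 1))] ≥ E_{x ∼ D̃_j}[max x (V (j + 1))]`,
as `x ↦ max x c` is nondecreasing and `D_j` dominates `D̃_j`.

For optimality, integrate out positions `n - 1, …, j` of the reward of any nonanticipating
stopping rule: almost surely the result is at most the reward already collected, or else `V j`.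
At `j = 0` this bounds its expected reward by `V 0`.
-/

open Set Function

theorem Nat.backward_induction {n : ℕ} {motive : ℕ → Prop} (top : ∀ j, n ≤ j → motive j)
    (step : ∀ j < n, motive (j + 1) → motive j) (j : ℕ) : motive j := by
  rcases le_or_gt n j with h | h
  · exact top j h
  · exact Nat.decreasingInduction (fun k hk ih => step k hk ih) (top n le_rfl) h.le

namespace SuppIn01

variable {ν : Measure ℝ}

theorem ae_mem_Icc (hν : SuppIn01 ν) : ∀ᵐ x ∂ν, x ∈ Icc (0 : ℝ) 1 :=
  measure_eq_zero_iff_ae_notMem.mp hν |>.mono fun _ hx => not_not.mp hx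

theorem integrable [IsFiniteMeasure ν] (hν : SuppIn01 ν) {f : ℝ → ℝ} (hf : Measurable f) (C : ℝ)
    (hC : ∀ x ∈ Icc (0 : ℝ) 1, |f x| ≤ C) : Integrable f ν :=
  .of_bound hf.aestronglyMeasurable C (hν.ae_mem_Icc.mono hC)

theorem integrable_max [IsFiniteMeasure ν] (hν : SuppIn01 ν) (c : ℝ) :
    Integrable (fun x => max x c) ν :=
  hν.integrable (measurable_id.max measurable_const) (1 + |c|) fun x hx =>
    abs_max_le_max_abs_abs.trans <|
      max_le (by rw [abs_of_nonneg hx.1]; linarith [abs_nonneg c, hx.2]) (by linarith)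

theorem integrable_ite [IsFiniteMeasure ν] (hν : SuppIn01 ν) (c d : ℝ) :
    Integrable (fun x => if c ≤ x then x else d) ν :=
  hν.integrable (Measurable.ite measurableSet_Ici measurable_id measurable_const) (1 + |d|)
    fun x hx => by split_ifs <;> grind [abs_of_nonneg, abs_nonneg]

end SuppIn01

theorem ae_pi_mem_Icc {n : ℕ} {μ : Fin n → Measure ℝ} [∀ i, IsProbabilityMeasure (μ i)]
    (hμ : ∀ i, SuppIn01 (μ i)) : ∀ᵐ t ∂Measure.pi μ, ∀ i, t i ∈ Icc (0 : ℝ) 1 :=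
  ae_all_iff.mpr fun i => Measure.tendsto_eval_ae_ae (hμ i).ae_mem_Icc

section StochasticDominance

variable {P Q : Measure ℝ} [IsProbabilityMeasure P] [IsProbabilityMeasure Q]

theorem measure_Ioi_le_of_cdf_le (hPQ : ∀ t, cdf P t ≤ cdf Q t) (s : ℝ) :
    Q (Ioi s) ≤ P (Ioi s) := by
  rw [← compl_Iic, prob_compl_eq_one_sub measurableSet_Iic, prob_compl_eq_one_sub measurableSet_Iic,
    ← ofReal_cdf, ← ofReal_cdf]
  exact tsub_le_tsub_left (ENNReal.ofReal_le_ofReal (hPQ s)) 1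

theorem integral_max_le_of_cdf_le (hPQ : ∀ t, cdf P t ≤ cdf Q t) {θ : ℝ}
    (hP : Integrable (fun x => max x θ) P) (hQ : Integrable (fun x => max x θ) Q) :
    ∫ x, max x θ ∂Q ≤ ∫ x, max x θ ∂P := by
  have hnn : ∀ ν : Measure ℝ, 0 ≤ᵐ[ν] fun x => max x θ - θ :=
    fun ν => ae_of_all _ fun x => sub_nonneg.mpr (le_max_right x θ)
  have integral_eq : ∀ (ν : Measure ℝ) [IsProbabilityMeasure ν], Integrable (fun x => max x θ) ν →
      ∫ x, max x θ ∂ν = (∫⁻ x, ENNReal.ofReal (max x θ - θ) ∂ν).toReal + θ := by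
    intro ν _ hν
    rw [← integral_eq_lintegral_of_nonneg_ae (hnn ν) (hν.sub (integrable_const θ)).1,
      integral_sub hν (integrable_const θ)]
    simp
  have layer_cake : ∀ ν : Measure ℝ,
      ∫⁻ x, ENNReal.ofReal (max x θ - θ) ∂ν = ∫⁻ s in Ioi 0, ν (Ioi (θ + s)) := by
    intro ν
    rw [lintegral_eq_lintegral_meas_lt ν (hnn ν) (by fun_prop)]
    refine setLIntegral_congr_fun measurableSet_Ioi fun s hs => congrArg ν ?_
    ext x
    simp only [mem_ofPred_eq, mem_Ioi, lt_sub_iff_add_lt', lt_max_iff]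
    grind
  have hfin : ∫⁻ s in Ioi 0, P (Ioi (θ + s)) ≠ ∞ :=
    layer_cake P ▸ (hP.sub (integrable_const θ)).lintegral_lt_top.ne
  rw [integral_eq Q hQ, integral_eq P hP, layer_cake, layer_cake, add_le_add_iff_right]
  exact ENNReal.toReal_mono hfin (lintegral_mono fun s => measure_Ioi_le_of_cdf_le hPQ _)

end StochasticDominance

section Update

variable {n : ℕ} (μ : Fin n → Measure ℝ) [∀ i, IsProbabilityMeasure (μ i)]

theorem measurePreserving_update (j : Fin n) :
    MeasurePreserving (fun p : (Fin n → ℝ) × ℝ => update p.1 j p.2)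
      ((Measure.pi μ).prod (μ j)) (Measure.pi μ) := by
  have hmeas : Measurable fun p : (Fin n → ℝ) × ℝ => update p.1 j p.2 := by fun_prop
  refine ⟨hmeas, (Measure.pi_eq fun s hs => ?_).symm⟩
  rw [Measure.map_apply hmeas (MeasurableSet.univ_pi hs)]
  have hpre : (fun p : (Fin n → ℝ) × ℝ => update p.1 j p.2) ⁻¹' univ.pi s
      = univ.pi (update s j univ) ×ˢ s j := by
    ext ⟨t, x⟩
    simp only [mem_preimage, mem_univ_pi, mem_prod, update_apply]
    constructor
    · intro h
      refine ⟨fun i => ?_, by simpa using h j⟩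
      by_cases hij : i = j
      · simp [hij]
      · simpa [hij] using h i
    · rintro ⟨h1, h2⟩ i
      by_cases hij : i = j
      · simpa [hij] using h2
      · simpa [hij] using h1 i
  rw [hpre, Measure.prod_prod, Measure.pi_pi]
  have hfactor : ∏ i, μ i (update s j univ i) = ∏ i, update (fun i => μ i (s i)) j 1 i :=
    Finset.prod_congr rfl fun i _ => by by_cases hij : i = j <;> simp [hij]
  rw [hfactor, Finset.prod_update_of_mem (Finset.mem_univ j), one_mul, mul_comm,
    ← Finset.prod_eq_mul_prod_sdiff_singleton_of_mem (Finset.mem_univ j) (fun i => μ i (s i))]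

variable {μ}

theorem integrable_comp_update {f : (Fin n → ℝ) → ℝ} (hf : Integrable f (Measure.pi μ))
    (j : Fin n) :
    Integrable (fun p : (Fin n → ℝ) × ℝ => f (update p.1 j p.2)) ((Measure.pi μ).prod (μ j)) :=
  ((measurePreserving_update μ j).integrable_comp hf.1).mpr hf

theorem integral_eq_integral_update {f : (Fin n → ℝ) → ℝ} (hf : Integrable f (Measure.pi μ))
    (j : Fin n) :
    ∫ t, f t ∂(Measure.pi μ) = ∫ t, ∫ x, f (update t j x) ∂(μ j) ∂(Measure.pi μ) := by
  have hφ := measurePreserving_update μ j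
  rw [← integral_prod _ (integrable_comp_update hf j),
    ← integral_map hφ.measurable.aemeasurable (by rw [hφ.map_eq]; exact hf.1), hφ.map_eq]

theorem ae_ae_update {p : (Fin n → ℝ) → Prop} (hp : ∀ᵐ t ∂(Measure.pi μ), p t) (j : Fin n) :
    ∀ᵐ t ∂(Measure.pi μ), ∀ᵐ x ∂(μ j), p (update t j x) :=
  Measure.ae_ae_of_ae_prod ((measurePreserving_update μ j).quasiMeasurePreserving.ae hp)

end Update

/-- The continuation value `d` enters `∫ x, (if c ≤ x then x else d) ∂ν` affinely, so it can be
averaged before or after the integral over `x`. -/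
theorem integral_integral_ite_le {α : Type*} [MeasurableSpace α] {m : Measure α}
    [IsProbabilityMeasure m] {ν : Measure ℝ} [IsProbabilityMeasure ν] {F : α → ℝ}
    (hF : Integrable F m) {c : ℝ} (hν : Integrable (fun x => if c ≤ x then x else 0) ν) :
    ∫ a, ∫ x, (if c ≤ x then x else F a) ∂ν ∂m = ∫ x, (if c ≤ x then x else ∫ a, F a ∂m) ∂ν := by
  have affine : ∀ d : ℝ, ∫ x, (if c ≤ x then x else d) ∂ν
      = ∫ x, (if c ≤ x then x else 0) ∂ν + ν.real (Iio c) * d := by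
    intro d
    have hsplit : (fun x : ℝ => if c ≤ x then x else d)
        = fun x => (if c ≤ x then x else 0) + (Iio c).indicator (fun _ => d) x := by
      ext x
      by_cases h : c ≤ x
      · simp [h]
      · rw [if_neg h, if_neg h, indicator_of_mem (mem_Iio.mpr (not_le.mp h)), zero_add]
    rw [hsplit, integral_add hν ((integrable_const d).indicator measurableSet_Iio),
      integral_indicator_const d measurableSet_Iio, smul_eq_mul]
  rw [affine (∫ a, F a ∂m), integral_congr_ae (ae_of_all _ fun a => affine (F a)),
    integral_add (integrable_const _) (hF.const_mul _), integral_const_mul]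
  simp

section ThresholdReward

variable {n : ℕ}

theorem prophetAux_of_le {θ t : Fin n → ℝ} {j : ℕ} (hj : n ≤ j) : prophetAux θ t j = 0 := by
  rw [prophetAux, dif_neg (not_lt.mpr hj)]

theorem suffixValue_of_le (μ : Fin n → Measure ℝ) {j : ℕ} (hj : n ≤ j) : suffixValue μ j = 0 := by
  rw [suffixValue, dif_neg (not_lt.mpr hj)]

theorem suffixValue_nonneg {μ : Fin n → Measure ℝ} (hμ : ∀ i, SuppIn01 (μ i)) (j : ℕ) :
    0 ≤ suffixValue μ j := by
  rw [suffixValue]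
  split_ifs
  · exact integral_nonneg_of_ae <| (hμ _).ae_mem_Icc.mono fun x hx => hx.1.trans (le_max_left _ _)
  · exact le_rfl

theorem measurable_prophetAux (θ : Fin n → ℝ) (j : ℕ) :
    Measurable fun t : Fin n → ℝ => prophetAux θ t j := by
  induction j using Nat.backward_induction (n := n) with
  | top j hj => simp only [prophetAux_of_le hj]; exact measurable_const
  | step j hj ih =>
    simp only [prophetAux.eq_1 θ _ j, dif_pos hj]
    split_ifs
    · exact measurable_pi_apply _
    · exact Measurable.ite (measurableSet_le measurable_const (measurable_pi_apply _))
        (measurable_pi_apply _) ih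

theorem prophetAux_mem_Icc (θ : Fin n → ℝ) {t : Fin n → ℝ} (ht : ∀ i, t i ∈ Icc (0 : ℝ) 1)
    (j : ℕ) : prophetAux θ t j ∈ Icc (0 : ℝ) 1 := by
  induction j using Nat.backward_induction (n := n) with
  | top j hj => rw [prophetAux_of_le hj]; exact left_mem_Icc.mpr zero_le_one
  | step j hj ih =>
    rw [prophetAux, dif_pos hj]
    split_ifs
    exacts [ht _, ht _, ih]

theorem integrable_prophetAux {μ : Fin n → Measure ℝ} [∀ i, IsProbabilityMeasure (μ i)]
    (hμ : ∀ i, SuppIn01 (μ i)) (θ : Fin n → ℝ) (j : ℕ) :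
    Integrable (fun t => prophetAux θ t j) (Measure.pi μ) :=
  .of_bound (measurable_prophetAux θ j).aestronglyMeasurable 1 <|
    (ae_pi_mem_Icc hμ).mono fun t ht => by
      have h := prophetAux_mem_Icc θ ht j
      rw [Real.norm_eq_abs, abs_of_nonneg h.1]
      exact h.2

theorem prophetAux_update_of_lt (θ t : Fin n → ℝ) {i : Fin n} (x : ℝ) {j : ℕ} (hij : i < j) :
    prophetAux θ (update t i x) j = prophetAux θ t j := by
  induction j using Nat.backward_induction (n := n) with
  | top j hj => rw [prophetAux_of_le hj, prophetAux_of_le hj]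
  | step j hj ih =>
    have hne : (⟨j, hj⟩ : Fin n) ≠ i := fun h => by simp [← h] at hij
    rw [prophetAux, prophetAux.eq_1 θ t, dif_pos hj, dif_pos hj, update_of_ne hne, ih (by omega)]

theorem prophetAux_update_self (θ t : Fin n → ℝ) {j : ℕ} (hj : j < n) (x : ℝ) :
    prophetAux θ (update t ⟨j, hj⟩ x) j
      = if j = n - 1 then x else if θ ⟨j, hj⟩ ≤ x then x else prophetAux θ t (j + 1) := by
  rw [prophetAux, dif_pos hj, update_self, prophetAux_update_of_lt θ t x (by simp)]

theorem integral_prophetAux_optThresholds_eq_integral_ite {μ : Fin n → Measure ℝ}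
    [∀ i, IsProbabilityMeasure (μ i)] (hμ : ∀ i, SuppIn01 (μ i)) (ν : Fin n → Measure ℝ)
    {j : ℕ} (hj : j < n) :
    ∫ t, prophetAux (optThresholds ν) t j ∂(Measure.pi μ)
      = ∫ x, (if suffixValue ν (j + 1) ≤ x then x
          else ∫ t, prophetAux (optThresholds ν) t (j + 1) ∂(Measure.pi μ)) ∂(μ ⟨j, hj⟩) := by
  set θ := optThresholds ν
  rw [integral_eq_integral_update (integrable_prophetAux hμ θ j) ⟨j, hj⟩,
    ← integral_integral_ite_le (integrable_prophetAux hμ θ (j + 1)) ((hμ _).integrable_ite _ 0)]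
  refine integral_congr_ae (ae_of_all _ fun t => integral_congr_ae ?_)
  filter_upwards [(hμ ⟨j, hj⟩).ae_mem_Icc] with x hx
  rw [prophetAux_update_self θ t hj x]
  by_cases hlast : j = n - 1
  · -- at the last step `x` is accepted anyway, and `suffixValue ν n = 0 ≤ x`
    rw [if_pos hlast, suffixValue_of_le ν (by omega), if_pos hx.1]
  · rw [if_neg hlast]
    simp only [θ, optThresholds, if_neg hlast]

theorem integral_prophetAux_optThresholds_eq_suffixValue {μ : Fin n → Measure ℝ}
    [∀ i, IsProbabilityMeasure (μ i)] (hμ : ∀ i, SuppIn01 (μ i)) (j : ℕ) :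
    ∫ t, prophetAux (optThresholds μ) t j ∂(Measure.pi μ) = suffixValue μ j := by
  induction j using Nat.backward_induction (n := n) with
  | top j hj => simp [prophetAux_of_le hj, suffixValue_of_le μ hj]
  | step j hj ih =>
    rw [integral_prophetAux_optThresholds_eq_integral_ite hμ μ hj, ih, suffixValue.eq_1 μ j,
      dif_pos hj]
    simp only [max_def']

theorem suffixValue_le_integral_prophetAux {D Dt : Fin n → Measure ℝ}
    [∀ i, IsProbabilityMeasure (D i)] [∀ i, IsProbabilityMeasure (Dt i)]
    (hD : ∀ i, SuppIn01 (D i)) (hDt : ∀ i, SuppIn01 (Dt i)) (hdom : StochDom D Dt) (j : ℕ) :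
    suffixValue Dt j ≤ ∫ t, prophetAux (optThresholds Dt) t j ∂(Measure.pi D) := by
  induction j using Nat.backward_induction (n := n) with
  | top j hj => simp [prophetAux_of_le hj, suffixValue_of_le Dt hj]
  | step j hj ih =>
    set c := suffixValue Dt (j + 1)
    calc suffixValue Dt j = ∫ x, max x c ∂(Dt ⟨j, hj⟩) := by rw [suffixValue, dif_pos hj]
      _ ≤ ∫ x, max x c ∂(D ⟨j, hj⟩) :=
        integral_max_le_of_cdf_le (hdom _) ((hD _).integrable_max c) ((hDt _).integrable_max c)
      _ ≤ ∫ x, (if c ≤ x then x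
            else ∫ t, prophetAux (optThresholds Dt) t (j + 1) ∂(Measure.pi D)) ∂(D ⟨j, hj⟩) := by
        refine integral_mono ((hD _).integrable_max c) ((hD _).integrable_ite _ _) fun x => ?_
        rw [max_def']
        split_ifs
        exacts [le_rfl, ih]
      _ = _ := (integral_prophetAux_optThresholds_eq_integral_ite hD Dt hj).symm

end ThresholdReward

noncomputable def thresholdStopFrom {n : ℕ} (θ t : Fin n → ℝ) : ℕ → ℕ
  | j =>
    if h : j < n then
      if j = n - 1 then j
      else if θ ⟨j, h⟩ ≤ t ⟨j, h⟩ then j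
      else thresholdStopFrom θ t (j + 1)
    else 0
  termination_by j => n - j
  decreasing_by omega

section ThresholdStop

variable {n : ℕ} (θ : Fin n → ℝ)

theorem thresholdStopFrom_mem (t : Fin n → ℝ) {j : ℕ} (hjn : j < n) :
    j ≤ thresholdStopFrom θ t j ∧ thresholdStopFrom θ t j < n := by
  induction j using Nat.backward_induction (n := n) with
  | top j hj => omega
  | step j hj ih =>
    rw [thresholdStopFrom, dif_pos hj]
    split_ifs
    · omega
    · omega
    · have := ih (by omega); omega

theorem prophetAux_eq_thresholdStopFrom (t : Fin n → ℝ) {j : ℕ} (hjn : j < n) :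
    prophetAux θ t j = t ⟨thresholdStopFrom θ t j, (thresholdStopFrom_mem θ t hjn).2⟩ := by
  induction j using Nat.backward_induction (n := n) with
  | top j hj => omega
  | step j hj ih =>
    simp only [prophetAux.eq_1 θ t j, thresholdStopFrom.eq_1 θ t j, dif_pos hj]
    split_ifs
    · rfl
    · rfl
    · exact ih (by omega)

theorem thresholdStopFrom_congr {t t' : Fin n → ℝ} {j : ℕ} (hjn : j < n)
    (htt' : ∀ i : Fin n, (i : ℕ) ≤ thresholdStopFrom θ t j → t i = t' i) :
    thresholdStopFrom θ t' j = thresholdStopFrom θ t j := by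
  induction j using Nat.backward_induction (n := n) with
  | top j hj => omega
  | step j hj ih =>
    have hstart : t ⟨j, hj⟩ = t' ⟨j, hj⟩ := htt' _ (thresholdStopFrom_mem θ t hjn).1
    rw [thresholdStopFrom.eq_1 θ t j] at htt' ⊢
    rw [thresholdStopFrom.eq_1 θ t' j, dif_pos hj, dif_pos hj, ← hstart]
    split_ifs at htt' ⊢
    · rfl
    · rfl
    · exact ih (by omega) htt'

noncomputable def thresholdStop (hn : 0 < n) (t : Fin n → ℝ) : Fin n :=
  ⟨thresholdStopFrom θ t 0, (thresholdStopFrom_mem θ t hn).2⟩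

theorem nonanticipating_thresholdStop (hn : 0 < n) : Nonanticipating (thresholdStop θ hn) :=
  fun _ _ htt' => Fin.ext (thresholdStopFrom_congr θ hn htt')

theorem prophetReward_eq_thresholdStop (hn : 0 < n) (t : Fin n → ℝ) :
    prophetReward θ t = t (thresholdStop θ hn t) :=
  prophetAux_eq_thresholdStopFrom θ t hn

end ThresholdStop

/-- The conditional expectation of `g` given the first `j` rewards. -/
noncomputable def tailIntegral {n : ℕ} (μ : Fin n → Measure ℝ) (g : (Fin n → ℝ) → ℝ) :
    ℕ → (Fin n → ℝ) → ℝ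
  | j =>
    if h : j < n then fun t => ∫ x, tailIntegral μ g (j + 1) (update t ⟨j, h⟩ x) ∂(μ ⟨j, h⟩)
    else g
  termination_by j => n - j
  decreasing_by omega

section OptimalStopping

variable {n : ℕ} {μ : Fin n → Measure ℝ} [∀ i, IsProbabilityMeasure (μ i)]

theorem integrable_tailIntegral {g : (Fin n → ℝ) → ℝ} (hg : Integrable g (Measure.pi μ))
    (j : ℕ) : Integrable (tailIntegral μ g j) (Measure.pi μ) := by
  induction j using Nat.backward_induction (n := n) with
  | top j hj => rwa [tailIntegral, dif_neg (not_lt.mpr hj)]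
  | step j hj ih =>
    rw [tailIntegral, dif_pos hj]
    exact (integrable_comp_update ih _).integral_prod_left

theorem integral_tailIntegral {g : (Fin n → ℝ) → ℝ} (hg : Integrable g (Measure.pi μ)) (j : ℕ) :
    ∫ t, tailIntegral μ g j t ∂(Measure.pi μ) = ∫ t, g t ∂(Measure.pi μ) := by
  induction j using Nat.backward_induction (n := n) with
  | top j hj => rw [tailIntegral, dif_neg (not_lt.mpr hj)]
  | step j hj ih =>
    rw [tailIntegral, dif_pos hj, ← integral_eq_integral_update (integrable_tailIntegral hg _), ih]

namespace Nonanticipating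

variable {τ : (Fin n → ℝ) → Fin n}

theorem apply_update_of_lt (hτ : Nonanticipating τ) {t : Fin n → ℝ} {i : Fin n} (hi : τ t < i)
    (x : ℝ) :
    τ (update t i x) = τ t :=
  hτ t _ fun _ hk => (update_of_ne (hk.trans_lt hi).ne _ _).symm

/-- One step of backward induction for an arbitrary stopping rule, `c` being the value of
continuing after position `j`. -/
theorem reward_update_le (hτ : Nonanticipating τ) (t : Fin n → ℝ) {j : ℕ} (hj : j < n) (x c : ℝ) :
    (if (τ (update t ⟨j, hj⟩ x) : ℕ) < j + 1 then update t ⟨j, hj⟩ x (τ (update t ⟨j, hj⟩ x))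
      else c) ≤ if (τ t : ℕ) < j then t (τ t) else max x c := by
  by_cases hstopped : (τ t : ℕ) < j
  · have hlt : τ t < ⟨j, hj⟩ := hstopped
    rw [hτ.apply_update_of_lt hlt, if_pos (by omega), if_pos hstopped, update_of_ne hlt.ne]
  · rw [if_neg hstopped]
    split_ifs with hnow
    · have hτu : τ (update t ⟨j, hj⟩ x) = ⟨j, hj⟩ := by
        refine Fin.ext (le_antisymm (show _ ≤ j by omega) (not_lt.mp fun hlt => hstopped ?_))
        have := hτ.apply_update_of_lt (t := update t ⟨j, hj⟩ x) hlt (t ⟨j, hj⟩)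
        rw [update_idem, update_eq_self] at this
        rwa [this]
      rw [hτu, update_self]
      exact le_max_left x c
    · exact le_max_right x c

end Nonanticipating

theorem tailIntegral_ae_le (hμ : ∀ i, SuppIn01 (μ i)) {τ : (Fin n → ℝ) → Fin n}
    (hτ : Nonanticipating τ) (hg : Integrable (fun t => t (τ t)) (Measure.pi μ)) (j : ℕ) :
    ∀ᵐ t ∂(Measure.pi μ), tailIntegral μ (fun t => t (τ t)) j t
      ≤ if (τ t : ℕ) < j then t (τ t) else suffixValue μ j := by
  induction j using Nat.backward_induction (n := n) with
  | top j hj =>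
    refine ae_of_all _ fun t => ?_
    rw [tailIntegral, dif_neg (not_lt.mpr hj), if_pos ((τ t).isLt.trans_le hj)]
  | step j hj ih =>
    filter_upwards [ae_ae_update ih ⟨j, hj⟩,
      (integrable_comp_update (integrable_tailIntegral hg (j + 1)) ⟨j, hj⟩).prod_right_ae]
      with t hle hint
    set c := suffixValue μ (j + 1)
    have hbound : Integrable (fun x => if (τ t : ℕ) < j then t (τ t) else max x c) (μ ⟨j, hj⟩) := by
      split_ifs
      exacts [integrable_const _, (hμ _).integrable_max c]
    rw [tailIntegral, dif_pos hj]
    calc ∫ x, tailIntegral μ _ (j + 1) (update t ⟨j, hj⟩ x) ∂(μ ⟨j, hj⟩)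
        ≤ ∫ x, (if (τ t : ℕ) < j then t (τ t) else max x c) ∂(μ ⟨j, hj⟩) :=
          integral_mono_ae hint hbound <|
            hle.mono fun x hx => hx.trans (hτ.reward_update_le t hj x c)
      _ = if (τ t : ℕ) < j then t (τ t) else suffixValue μ j := by
          split_ifs
          · simp
          · rw [suffixValue.eq_1 μ j, dif_pos hj]

theorem integral_le_suffixValue_of_nonanticipating (hμ : ∀ i, SuppIn01 (μ i))
    {τ : (Fin n → ℝ) → Fin n} (hτ : Nonanticipating τ) :
    ∫ t, t (τ t) ∂(Measure.pi μ) ≤ suffixValue μ 0 := by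
  by_cases hg : Integrable (fun t => t (τ t)) (Measure.pi μ)
  · rw [← integral_tailIntegral hg 0]
    calc ∫ t, tailIntegral μ _ 0 t ∂(Measure.pi μ) ≤ ∫ _, suffixValue μ 0 ∂(Measure.pi μ) :=
          integral_mono_ae (integrable_tailIntegral hg 0) (integrable_const _) <|
            (tailIntegral_ae_le hμ hτ hg 0).mono fun t ht => by simpa using ht
      _ = suffixValue μ 0 := by simp
  · rw [integral_undef hg]
    exact suffixValue_nonneg hμ 0

theorem optStopValue_eq_suffixValue (hμ : ∀ i, SuppIn01 (μ i)) :
    optStopValue μ = suffixValue μ 0 := by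
  rcases Nat.eq_zero_or_pos n with rfl | hn
  · have : IsEmpty {τ : (Fin 0 → ℝ) → Fin 0 // Nonanticipating τ} :=
      ⟨fun τ => (τ.1 finZeroElim).elim0⟩
    rw [optStopValue, Real.iSup_of_isEmpty, suffixValue_of_le μ le_rfl]
  · have hbdd : BddAbove (range fun τ : {τ : (Fin n → ℝ) → Fin n // Nonanticipating τ} =>
        ∫ t, t (τ.1 t) ∂(Measure.pi μ)) :=
      ⟨_, forall_mem_range.mpr fun τ => integral_le_suffixValue_of_nonanticipating hμ τ.2⟩
    have : Nonempty {τ : (Fin n → ℝ) → Fin n // Nonanticipating τ} :=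
      ⟨⟨thresholdStop (optThresholds μ) hn, nonanticipating_thresholdStop _ hn⟩⟩
    refine le_antisymm (ciSup_le fun τ => integral_le_suffixValue_of_nonanticipating hμ τ.2) ?_
    calc suffixValue μ 0
        = ∫ t, t (thresholdStop (optThresholds μ) hn t) ∂(Measure.pi μ) := by
          simp_rw [← prophetReward_eq_thresholdStop]
          exact (integral_prophetAux_optThresholds_eq_suffixValue hμ 0).symm
      _ ≤ optStopValue μ := le_ciSup hbdd ⟨_, nonanticipating_thresholdStop _ hn⟩

end OptimalStopping

theorem stmt10_general (n : ℕ) (D Dt : Fin n → Measure ℝ)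
    [∀ i, IsProbabilityMeasure (D i)] [∀ i, IsProbabilityMeasure (Dt i)]
    (hD : ∀ i, SuppIn01 (D i)) (hDt : ∀ i, SuppIn01 (Dt i))
    (hdom : StochDom D Dt) :
    expVal (prophetReward (optThresholds Dt)) Dt
        ≤ expVal (prophetReward (optThresholds Dt)) D
      ∧ expVal (prophetReward (optThresholds Dt)) Dt = optStopValue Dt := by
  have hopt : expVal (prophetReward (optThresholds Dt)) Dt = suffixValue Dt 0 :=
    integral_prophetAux_optThresholds_eq_suffixValue hDt 0
  exact ⟨hopt ▸ suffixValue_le_integral_prophetAux hD hDt hdom 0,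
    hopt.trans (optStopValue_eq_suffixValue hDt).symm⟩

theorem stmt10 (n : ℕ) (hn : 1 ≤ n) (D Dt : Fin n → Measure ℝ)
    [∀ i, IsProbabilityMeasure (D i)] [∀ i, IsProbabilityMeasure (Dt i)]
    (hD : ∀ i, SuppIn01 (D i)) (hDt : ∀ i, SuppIn01 (Dt i))
    (hdom : StochDom D Dt) :
    expVal (prophetReward (optThresholds Dt)) Dt
        ≤ expVal (prophetReward (optThresholds Dt)) D
      ∧ expVal (prophetReward (optThresholds Dt)) Dt = optStopValue Dt :=
  stmt10_general n D Dt hD hDt hdom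
end

section
/- Ω(n/ε²) samples are necessary for Pandora's problem: there exist absolute constants c, c' > 0 such that for every (possibly randomized) learning algorithm mapping N i.i.d. sample reward vectors to a policy, if N ≤ c·n/ε² then there is an instance with n boxes, each of opening cost 1/n, and each reward distribution equal either to Bernoulli with success probability (1+ε)/n or to Bernoulli with success probability (1−ε)/n (rewards in {0,1}), on which the expected objective of the learned policy is at most the optimal expected objective minus c'·ε. -/
open MeasureTheory ProbabilityTheory
open scoped NNReal ENNReal

/-- Weitzman's reservation value of a box with reward distribution `μ` and
opening cost `c`: `σ = inf {σ : E[max(t − σ, 0)] ≤ c}`. -/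
noncomputable def reservation (μ : Measure ℝ) (c : ℝ) : ℝ :=
  sInf {σ : ℝ | ∫ t, max (t - σ) 0 ∂μ ≤ c}

/-- Execution of Weitzman-style index policy: boxes are inspected in the order
`o 0, o 1, …`; with current best observed reward `best` and total cost `paid`,
the policy stops (taking `best − paid`) as soon as `best` is at least the
reservation value of the next box, and otherwise opens it. -/
noncomputable def weitzAux {n : ℕ} (o : Equiv.Perm (Fin n)) (σ c t : Fin n → ℝ) :
    ℕ → ℝ → ℝ → ℝ
  | k, best, paid =>
    if h : k < n then
      if σ (o ⟨k, h⟩) ≤ best then best - paid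
      else weitzAux o σ c t (k + 1) (max best (t (o ⟨k, h⟩))) (paid + c (o ⟨k, h⟩))
    else best - paid
  termination_by k => n - k
  decreasing_by omega

/-- The realized objective (reward taken minus total cost paid) of Weitzman's
index policy with inspection order `o`, reservation values `σ` and costs `c`,
on the reward realization `t`. -/
noncomputable def weitzmanReward {n : ℕ} (o : Equiv.Perm (Fin n)) (σ c t : Fin n → ℝ) : ℝ :=
  weitzAux o σ c t 0 0 0

/-- Best observed reward in a history (`0` if nothing was opened). -/
noncomputable def histBest {n : ℕ} (hist : Fin n → Option ℝ) : ℝ :=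
  ⨆ i : Fin n, (hist i).getD 0

/-- Total cost paid in a history. -/
noncomputable def histPaid {n : ℕ} (c : Fin n → ℝ) (hist : Fin n → Option ℝ) : ℝ :=
  ∑ i : Fin n, if (hist i).isSome then c i else 0

/-- Execution of a general adaptive policy `π`: given the history of observed
rewards, `π` either proposes to open a further (unopened) box or stops; the
realized objective is the best observed reward minus the total cost paid. -/
noncomputable def runPolicyAux {n : ℕ} (π : (Fin n → Option ℝ) → Option (Fin n))
    (c t : Fin n → ℝ) : ℕ → (Fin n → Option ℝ) → ℝ
  | 0, hist => histBest hist - histPaid c hist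
  | fuel + 1, hist =>
    match π hist with
    | none => histBest hist - histPaid c hist
    | some i =>
      if (hist i).isSome then histBest hist - histPaid c hist
      else runPolicyAux π c t fuel (Function.update hist i (some (t i)))

/-- The realized objective of the adaptive policy `π` on realization `t`. -/
noncomputable def runPolicy {n : ℕ} (π : (Fin n → Option ℝ) → Option (Fin n))
    (c t : Fin n → ℝ) : ℝ :=
  runPolicyAux π c t n fun _ => none

/-- The optimal expected objective of Pandora's problem with reward
distributions `μ` and costs `c`, over all adaptive policies. -/
noncomputable def pandoraOpt {n : ℕ} (μ : Fin n → Measure ℝ) (c : Fin n → ℝ) : ℝ :=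
  ⨆ π : (Fin n → Option ℝ) → Option (Fin n), ∫ t, runPolicy π c t ∂(Measure.pi μ)

/-- The Bernoulli distribution on `{0,1} ⊆ ℝ` with success probability `p`. -/
noncomputable def bernR (p : ℝ) : Measure ℝ :=
  p.toNNReal • Measure.dirac (1 : ℝ) + (1 - p).toNNReal • Measure.dirac (0 : ℝ)

/-- The hard Pandora instance: box `i` has reward distribution Bernoulli with
success probability `(1+ε)/n` if `v i` (a 'plus' box) and `(1−ε)/n` otherwise. -/
noncomputable def hardBox (n : ℕ) (ε : ℝ) (v : Fin n → Bool) (i : Fin n) : Measure ℝ :=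
  bernR ((1 + if v i then ε else -ε) / n)

/-!
Whether a policy opens box `i` cannot depend on the reward inside box `i`, so on independent
Bernoulli(`pᵢ`) boxes with costs `cᵢ` its expected objective is at most
`∑ᵢ (pᵢ - cᵢ) Pr[i is opened]`; on the instance `v` this is `(ε/n) ∑ᵢ ±Pr[i is opened]`, with the
sign of box `i`. Switching box `i` from plus to minus moves the law of the `N` samples by at most
`√(12 N ε² / n) ≤ 1/100` in total variation (the Hellinger affinity tensorizes), so the learned
policy opens box `i` with almost the same probability in both instances. Summing over all
instances with at least `m ≈ n/8` plus boxes and pairing each instance with its flips, the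
learner earns on average at most `ε (m/n) · (share of instances with exactly m plus boxes) + ε/100
≤ ε (m/(2n) + 1/100)`, whereas opening plus boxes until a reward `1` shows up earns
`(2/3)(m/n) ε` on each of them.
-/

namespace PandoraSampleLowerBound

open MeasureTheory Finset

noncomputable section

section FiniteSupport

variable {κ : Type*} [Fintype κ]

lemma integral_sum_smul_dirac {α : Type*} [MeasurableSpace α] [MeasurableSingletonClass α]
    (w : κ → ℝ) (hw : ∀ k, 0 ≤ w k) (y : κ → α) (f : α → ℝ) :
    ∫ x, f x ∂(∑ k, ENNReal.ofReal (w k) • Measure.dirac (y k)) = ∑ k, w k * f (y k) := by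
  have hint : ∀ a : α, Integrable f (Measure.dirac a) := fun a =>
    (integrable_const (f a)).congr (ae_eq_dirac f).symm
  rw [integral_finsetSum_measure fun k _ => (hint (y k)).smul_measure ENNReal.ofReal_ne_top]
  refine sum_congr rfl fun k _ => ?_
  rw [integral_smul_measure, integral_dirac, ENNReal.toReal_ofReal (hw k), smul_eq_mul]

lemma isFiniteMeasure_sum_smul_dirac {α : Type*} [MeasurableSpace α] (w : κ → ℝ) (y : κ → α) :
    IsFiniteMeasure (∑ k, ENNReal.ofReal (w k) • Measure.dirac (y k)) := by
  constructor
  simp only [Measure.coe_finsetSum, Finset.sum_apply, Measure.smul_apply, smul_eq_mul]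
  exact ENNReal.sum_lt_top.2 fun k _ => ENNReal.mul_lt_top ENNReal.ofReal_lt_top (by simp)

lemma sum_smul_dirac_apply {β : Type*} [MeasurableSpace β] (c : κ → ℝ≥0∞) (z : κ → β)
    {t : Set β} (ht : MeasurableSet t) :
    (∑ k, c k • Measure.dirac (z k)) t = ∑ k, c k * t.indicator 1 (z k) := by
  simp only [Measure.coe_finsetSum, Finset.sum_apply, Measure.smul_apply,
    Measure.dirac_apply' _ ht, smul_eq_mul]

lemma pi_sum_smul_dirac {ι : Type*} [Fintype ι] [DecidableEq ι] {α : ι → Type*}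
    [∀ i, MeasurableSpace (α i)] [∀ i, MeasurableSingletonClass (α i)]
    (w : ι → κ → ℝ) (hw : ∀ i k, 0 ≤ w i k) (y : ∀ i, κ → α i) :
    Measure.pi (fun i => ∑ k, ENNReal.ofReal (w i k) • Measure.dirac (y i k))
      = ∑ g : ι → κ, ENNReal.ofReal (∏ i, w i (g i)) • Measure.dirac (fun i => y i (g i)) := by
  have := fun i => isFiniteMeasure_sum_smul_dirac (w i) (y i)
  refine Measure.pi_eq fun s hs => ?_
  rw [sum_smul_dirac_apply _ _ (MeasurableSet.univ_pi hs)]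
  simp_rw [sum_smul_dirac_apply _ _ (hs _), Fintype.prod_sum, prod_mul_distrib,
    ENNReal.ofReal_prod_of_nonneg fun i _ => hw i _]
  refine sum_congr rfl fun g _ => ?_
  congr 1
  by_cases hmem : (fun i => y i (g i)) ∈ Set.univ.pi s
  · rw [Set.indicator_of_mem hmem]
    simp [Set.indicator_of_mem (hmem _ (Set.mem_univ _))]
  · rw [Set.indicator_of_notMem hmem]
    obtain ⟨i, hi⟩ : ∃ i, y i (g i) ∉ s i := by simpa [Set.mem_univ_pi] using hmem
    exact (prod_eq_zero (mem_univ i) (by simp [Set.indicator_of_notMem hi])).symm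

end FiniteSupport

def bit (b : Bool) : ℝ := if b then 1 else 0

def bits {ι : Type*} (b : ι → Bool) : ι → ℝ := fun i => bit (b i)

lemma bit_nonneg (b : Bool) : 0 ≤ bit b := by cases b <;> simp [bit]

lemma bit_le_one (b : Bool) : bit b ≤ 1 := by cases b <;> simp [bit]

lemma bits_update {ι : Type*} [DecidableEq ι] (b : ι → Bool) (i : ι) (β : Bool) :
    bits (Function.update b i β) = Function.update (bits b) i (bit β) := by
  funext j
  rcases eq_or_ne j i with rfl | hne
  · simp [bits]
  · simp [bits, Function.update_of_ne hne]

def bernWeight (p : ℝ) (b : Bool) : ℝ := if b then p else 1 - p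

lemma bernWeight_nonneg {p : ℝ} (hp : p ∈ Set.Icc (0 : ℝ) 1) (b : Bool) : 0 ≤ bernWeight p b := by
  cases b <;> simp [bernWeight, hp.1, hp.2]

lemma sum_bernWeight (p : ℝ) : ∑ b, bernWeight p b = 1 := by simp [bernWeight]

lemma bernR_eq_sum_smul_dirac (p : ℝ) :
    bernR p = ∑ b, ENNReal.ofReal (bernWeight p b) • Measure.dirac (bit b) := by
  rw [Fintype.sum_bool]
  rfl

section ProductWeights

variable {ι : Type*} [Fintype ι] {p : ι → ℝ}

def prodWeight (p : ι → ℝ) (b : ι → Bool) : ℝ := ∏ i, bernWeight (p i) (b i)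

def sampleWeight {N : ℕ} (p : ι → ℝ) (S : Fin N → ι → Bool) : ℝ := ∏ k, prodWeight p (S k)

lemma prodWeight_nonneg (hp : ∀ i, p i ∈ Set.Icc (0 : ℝ) 1) (b : ι → Bool) :
    0 ≤ prodWeight p b :=
  prod_nonneg fun i _ => bernWeight_nonneg (hp i) _

lemma sampleWeight_nonneg {N : ℕ} (hp : ∀ i, p i ∈ Set.Icc (0 : ℝ) 1) (S : Fin N → ι → Bool) :
    0 ≤ sampleWeight p S :=
  prod_nonneg fun _ _ => prodWeight_nonneg hp _

variable [DecidableEq ι]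

lemma sum_prodWeight (p : ι → ℝ) : ∑ b, prodWeight p b = 1 := by
  simp only [prodWeight, ← Fintype.prod_sum, sum_bernWeight, prod_const_one]

lemma sum_sampleWeight {N : ℕ} (p : ι → ℝ) : ∑ S : Fin N → ι → Bool, sampleWeight p S = 1 := by
  simp only [sampleWeight, ← Fintype.prod_sum, sum_prodWeight, prod_const_one]

lemma pi_bernR (hp : ∀ i, p i ∈ Set.Icc (0 : ℝ) 1) :
    Measure.pi (fun i => bernR (p i))
      = ∑ b, ENNReal.ofReal (prodWeight p b) • Measure.dirac (bits b) := by
  simp_rw [bernR_eq_sum_smul_dirac]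
  exact pi_sum_smul_dirac (fun i k => bernWeight (p i) k)
    (fun i k => bernWeight_nonneg (hp i) k) (fun _ k => bit k)

lemma integral_pi_bernR (hp : ∀ i, p i ∈ Set.Icc (0 : ℝ) 1) (f : (ι → ℝ) → ℝ) :
    ∫ t, f t ∂(Measure.pi fun i => bernR (p i)) = ∑ b, prodWeight p b * f (bits b) := by
  rw [pi_bernR hp]
  exact integral_sum_smul_dirac _ (prodWeight_nonneg hp) _ f

lemma integral_samples_bernR {n N : ℕ} {p : Fin n → ℝ} (hp : ∀ i, p i ∈ Set.Icc (0 : ℝ) 1)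
    (F : (Fin N → Fin n → ℝ) → ℝ) :
    ∫ s, F s ∂(samples N fun i => bernR (p i))
      = ∑ S : Fin N → Fin n → Bool, sampleWeight p S * F (fun k => bits (S k)) := by
  rw [samples, pi_bernR hp, pi_sum_smul_dirac (fun _ b => prodWeight p b)
    (fun _ b => prodWeight_nonneg hp b) (fun _ b => bits b)]
  exact integral_sum_smul_dirac _ (sampleWeight_nonneg hp) _ F

end ProductWeights

section Hellinger

lemma sum_sqrt_prod_mul_prod {ι κ : Type*} [Fintype ι] [DecidableEq ι] [Fintype κ]
    (w w' : ι → κ → ℝ) (hw : ∀ i k, 0 ≤ w i k) (hw' : ∀ i k, 0 ≤ w' i k) :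
    ∑ g : ι → κ, √((∏ i, w i (g i)) * ∏ i, w' i (g i)) = ∏ i, ∑ k, √(w i k * w' i k) := by
  rw [Fintype.prod_sum]
  refine sum_congr rfl fun g _ => ?_
  rw [← prod_mul_distrib, Real.sqrt_prod _ fun i _ => mul_nonneg (hw i _) (hw' i _)]

/-- Cauchy–Schwarz applied to `|P - Q| = |√P - √Q| (√P + √Q)`. -/
lemma sq_sum_abs_sub_le {α : Type*} [Fintype α] {P Q : α → ℝ} (hP : ∀ a, 0 ≤ P a)
    (hQ : ∀ a, 0 ≤ Q a) (hP1 : ∑ a, P a = 1) (hQ1 : ∑ a, Q a = 1) :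
    (∑ a, |P a - Q a|) ^ 2 ≤ 4 * (1 - (∑ a, √(P a * Q a)) ^ 2) := by
  set B := ∑ a, √(P a * Q a)
  have hsq : ∀ a, √(P a) * √(Q a) = √(P a * Q a) := fun a => (Real.sqrt_mul (hP a) _).symm
  have hP' := fun a => Real.sq_sqrt (hP a)
  have hQ' := fun a => Real.sq_sqrt (hQ a)
  have hfactor : ∀ a, |P a - Q a| = |√(P a) - √(Q a)| * (√(P a) + √(Q a)) := fun a => by
    rw [← abs_of_nonneg (by positivity : 0 ≤ √(P a) + √(Q a)), ← abs_mul]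
    congr 1
    nlinarith [hP' a, hQ' a]
  have hminus : ∑ a, |√(P a) - √(Q a)| ^ 2 = 2 - 2 * B := by
    simp_rw [sq_abs, sub_sq, hP', hQ', mul_assoc, hsq, sum_add_distrib, sum_sub_distrib,
      ← mul_sum, hP1, hQ1]
    ring
  have hplus : ∑ a, (√(P a) + √(Q a)) ^ 2 = 2 + 2 * B := by
    simp_rw [add_sq, hP', hQ', mul_assoc, hsq, sum_add_distrib, ← mul_sum, hP1, hQ1]
    ring
  calc (∑ a, |P a - Q a|) ^ 2
      = (∑ a, |√(P a) - √(Q a)| * (√(P a) + √(Q a))) ^ 2 := by simp_rw [hfactor]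
    _ ≤ (∑ a, |√(P a) - √(Q a)| ^ 2) * ∑ a, (√(P a) + √(Q a)) ^ 2 :=
        sum_mul_sq_le_sq_mul_sq _ _ _
    _ = 4 * (1 - B ^ 2) := by rw [hminus, hplus]; ring

def bernAffinity (p q : ℝ) : ℝ := ∑ b, √(bernWeight p b * bernWeight q b)

lemma bernAffinity_self {p : ℝ} (hp : p ∈ Set.Icc (0 : ℝ) 1) : bernAffinity p p = 1 := by
  simp only [bernAffinity, Real.sqrt_mul_self (bernWeight_nonneg hp _), sum_bernWeight]

lemma bernAffinity_nonneg (p q : ℝ) : 0 ≤ bernAffinity p q :=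
  sum_nonneg fun _ _ => Real.sqrt_nonneg _

lemma bernAffinity_le_one {p q : ℝ} (hp : p ∈ Set.Icc (0 : ℝ) 1) (hq : q ∈ Set.Icc (0 : ℝ) 1) :
    bernAffinity p q ≤ 1 := by
  have amgm : ∀ b, √(bernWeight p b * bernWeight q b) ≤ (bernWeight p b + bernWeight q b) / 2 :=
    fun b => Real.sqrt_le_iff.2 ⟨by linarith [bernWeight_nonneg hp b, bernWeight_nonneg hq b],
      by nlinarith [sq_nonneg (bernWeight p b - bernWeight q b)]⟩
  calc bernAffinity p q ≤ ∑ b, (bernWeight p b + bernWeight q b) / 2 := sum_le_sum fun b _ => amgm b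
    _ = 1 := by rw [← sum_div, sum_add_distrib, sum_bernWeight, sum_bernWeight]; norm_num

lemma one_sub_bernAffinity_le {ε x : ℝ} (hε : ε ∈ Set.Icc (0 : ℝ) 1) (hx0 : 0 ≤ x)
    (hx : x ≤ 1 / 3) :
    1 - bernAffinity ((1 + ε) * x) ((1 - ε) * x) ≤ 3 / 2 * ε ^ 2 * x := by
  obtain ⟨hε0, hε1⟩ := hε
  have hε2 : 0 ≤ 1 - ε ^ 2 := by nlinarith
  have hsuccess : x * (1 - ε ^ 2) ≤ √((1 + ε) * x * ((1 - ε) * x)) := by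
    refine (Real.le_sqrt (mul_nonneg hx0 hε2) (by nlinarith [mul_nonneg (sq_nonneg x) hε2])).2 ?_
    nlinarith [mul_nonneg (mul_nonneg hx0 hx0) (mul_nonneg (sq_nonneg ε) hε2)]
  have hfailure : 1 - x - 3 / 2 * ε ^ 2 * x ^ 2 ≤ √((1 - (1 + ε) * x) * (1 - (1 - ε) * x)) := by
    have hεx : ε ^ 2 * x ^ 2 ≤ 1 / 9 := by
      nlinarith [mul_le_mul (pow_le_one₀ hε0 hε1 : ε ^ 2 ≤ 1) (pow_le_pow_left₀ hx0 hx 2)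
        (sq_nonneg x) zero_le_one]
    refine (Real.le_sqrt (by nlinarith) (by nlinarith)).2 ?_
    nlinarith [mul_nonneg (mul_nonneg (sq_nonneg ε) (sq_nonneg x)) (by nlinarith : 0 ≤ 1 / 3 - x),
      mul_nonneg (mul_nonneg (sq_nonneg ε) (sq_nonneg x)) (by nlinarith : 0 ≤ 1 - ε ^ 2 * x ^ 2)]
  have hA : bernAffinity ((1 + ε) * x) ((1 - ε) * x)
      = √((1 + ε) * x * ((1 - ε) * x)) + √((1 - (1 + ε) * x) * (1 - (1 - ε) * x)) := by
    simp [bernAffinity, bernWeight, add_comm]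
  rw [hA]
  nlinarith [mul_nonneg (mul_nonneg (sq_nonneg ε) hx0) (by linarith : 0 ≤ 1 / 3 - x)]

variable {ι : Type*} [Fintype ι] [DecidableEq ι] {p q : ι → ℝ}

lemma sum_sqrt_prodWeight_mul (hp : ∀ i, p i ∈ Set.Icc (0 : ℝ) 1)
    (hq : ∀ i, q i ∈ Set.Icc (0 : ℝ) 1) {i : ι} (hpq : ∀ j ≠ i, p j = q j) :
    ∑ b, √(prodWeight p b * prodWeight q b) = bernAffinity (p i) (q i) := by
  unfold prodWeight
  rw [sum_sqrt_prod_mul_prod _ _ (fun j => bernWeight_nonneg (hp j))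
    (fun j => bernWeight_nonneg (hq j)), ← mul_prod_erase _ _ (mem_univ i)]
  rw [prod_eq_one fun j hj => by rw [hpq j (ne_of_mem_erase hj)]; exact bernAffinity_self (hq j)]
  exact mul_one _

lemma sum_sqrt_sampleWeight_mul {N : ℕ} (hp : ∀ i, p i ∈ Set.Icc (0 : ℝ) 1)
    (hq : ∀ i, q i ∈ Set.Icc (0 : ℝ) 1) :
    ∑ S : Fin N → ι → Bool, √(sampleWeight p S * sampleWeight q S)
      = (∑ b, √(prodWeight p b * prodWeight q b)) ^ N := by
  unfold sampleWeight
  rw [sum_sqrt_prod_mul_prod _ _ (fun _ => prodWeight_nonneg hp)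
    (fun _ => prodWeight_nonneg hq), prod_const, card_univ, Fintype.card_fin]

end Hellinger

section Policies

variable {n : ℕ} (π : (Fin n → Option ℝ) → Option (Fin n))

def openedHist (t : Fin n → ℝ) : ℕ → (Fin n → Option ℝ) → (Fin n → Option ℝ)
  | 0, h => h
  | fuel + 1, h =>
    match π h with
    | none => h
    | some i => if (h i).isSome then h else openedHist t fuel (Function.update h i (some (t i)))

lemma runPolicyAux_eq_openedHist (c t : Fin n → ℝ) (fuel : ℕ) (h : Fin n → Option ℝ) :
    runPolicyAux π c t fuel h
      = histBest (openedHist π t fuel h) - histPaid c (openedHist π t fuel h) := by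
  induction fuel generalizing h with
  | zero => simp [runPolicyAux, openedHist]
  | succ fuel ih =>
    cases hπ : π h with
    | none => simp [runPolicyAux, openedHist, hπ]
    | some j =>
      by_cases hs : (h j).isSome
      · simp [runPolicyAux, openedHist, hπ, hs]
      · simp only [runPolicyAux, openedHist, hπ, hs, if_false, Bool.false_eq_true]
        exact ih _

lemma isSome_openedHist_of_isSome (t : Fin n → ℝ) {i : Fin n} (fuel : ℕ)
    {h : Fin n → Option ℝ} (hi : (h i).isSome) : (openedHist π t fuel h i).isSome := by
  induction fuel generalizing h with
  | zero => simpa [openedHist] using hi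
  | succ fuel ih =>
    cases hπ : π h with
    | none => simpa [openedHist, hπ] using hi
    | some j =>
      by_cases hs : (h j).isSome
      · simpa [openedHist, hπ, hs] using hi
      · simp only [openedHist, hπ, hs, if_false, Bool.false_eq_true]
        apply ih
        rcases eq_or_ne j i with rfl | hne
        · simp
        · simpa [Function.update_of_ne (Ne.symm hne)] using hi

lemma openedHist_eq_none_or_eq_some (t : Fin n → ℝ) (fuel : ℕ) {h : Fin n → Option ℝ}
    (hh : ∀ j, h j = none ∨ h j = some (t j)) (j : Fin n) :
    openedHist π t fuel h j = none ∨ openedHist π t fuel h j = some (t j) := by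
  induction fuel generalizing h with
  | zero => simpa [openedHist] using hh j
  | succ fuel ih =>
    cases hπ : π h with
    | none => simpa [openedHist, hπ] using hh j
    | some k =>
      by_cases hs : (h k).isSome
      · simpa [openedHist, hπ, hs] using hh j
      · simp only [openedHist, hπ, hs, if_false, Bool.false_eq_true]
        refine ih fun j' => ?_
        rcases eq_or_ne j' k with rfl | hne
        · simp
        · simpa [Function.update_of_ne hne] using hh j'

/-- A box's reward is read only after the box has been opened. -/
lemma isSome_openedHist_update (t : Fin n → ℝ) (i : Fin n) (x : ℝ) (fuel : ℕ)
    (h : Fin n → Option ℝ) :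
    (openedHist π (Function.update t i x) fuel h i).isSome = (openedHist π t fuel h i).isSome := by
  induction fuel generalizing h with
  | zero => simp [openedHist]
  | succ fuel ih =>
    cases hπ : π h with
    | none => simp [openedHist, hπ]
    | some j =>
      by_cases hs : (h j).isSome
      · simp [openedHist, hπ, hs]
      · simp only [openedHist, hπ, hs, if_false, Bool.false_eq_true]
        rcases eq_or_ne j i with rfl | hne
        · rw [isSome_openedHist_of_isSome π t fuel (by simp),
            isSome_openedHist_of_isSome π _ fuel (by simp)]
        · rw [Function.update_of_ne hne]
          exact ih _

lemma runPolicyAux_update_of_isSome (c t : Fin n → ℝ) {i : Fin n} (x : ℝ) (fuel : ℕ)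
    {h : Fin n → Option ℝ} (hi : (h i).isSome) :
    runPolicyAux π c (Function.update t i x) fuel h = runPolicyAux π c t fuel h := by
  induction fuel generalizing h with
  | zero => simp [runPolicyAux]
  | succ fuel ih =>
    cases hπ : π h with
    | none => simp [runPolicyAux, hπ]
    | some j =>
      by_cases hs : (h j).isSome
      · simp [runPolicyAux, hπ, hs]
      · have hne : j ≠ i := by rintro rfl; exact hs hi
        simp only [runPolicyAux, hπ, hs, if_false, Bool.false_eq_true, Function.update_of_ne hne]
        apply ih
        rcases eq_or_ne i j with rfl | hne'
        · simp
        · simpa [Function.update_of_ne hne'] using hi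

def opened (t : Fin n → ℝ) (i : Fin n) : Bool := (openedHist π t n (fun _ => none) i).isSome

lemma opened_update_self (t : Fin n → ℝ) (i : Fin n) (x : ℝ) :
    opened π (Function.update t i x) i = opened π t i :=
  isSome_openedHist_update π t i x n _

/-- The best observed reward is at most the sum of all observed rewards. -/
lemma histBest_sub_histPaid_le (c t : Fin n → ℝ) (ht : ∀ j, 0 ≤ t j) {H : Fin n → Option ℝ}
    (hH : ∀ j, H j = none ∨ H j = some (t j)) :
    histBest H - histPaid c H ≤ ∑ i, if (H i).isSome then t i - c i else 0 := by
  have hterm : ∀ i, 0 ≤ if (H i).isSome then t i else 0 := fun i => by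
    split_ifs <;> simp [ht i]
  have hbest : histBest H ≤ ∑ i, if (H i).isSome then t i else 0 := by
    refine Real.iSup_le (fun i => ?_) (sum_nonneg fun i _ => hterm i)
    rcases hH i with hi | hi
    · simpa [hi] using sum_nonneg fun i _ => hterm i
    · simpa [hi] using single_le_sum (fun j _ => hterm j) (mem_univ i)
  have hsplit : ∀ i, (if (H i).isSome then t i - c i else 0)
      = (if (H i).isSome then t i else 0) - if (H i).isSome then c i else 0 := fun i => by
    split_ifs <;> ring
  rw [sum_congr rfl fun i _ => hsplit i, sum_sub_distrib, histPaid]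
  linarith

lemma runPolicy_le_sum_opened (c t : Fin n → ℝ) (ht : ∀ j, 0 ≤ t j) :
    runPolicy π c t ≤ ∑ i, if opened π t i then t i - c i else 0 := by
  rw [runPolicy, runPolicyAux_eq_openedHist]
  exact histBest_sub_histPaid_le c t ht
    (openedHist_eq_none_or_eq_some π t n (fun _ => Or.inl rfl))

lemma runPolicy_le_one {c t : Fin n → ℝ} (hc : ∀ j, 0 ≤ c j) (ht : ∀ j, t j ≤ 1) :
    runPolicy π c t ≤ 1 := by
  rw [runPolicy, runPolicyAux_eq_openedHist, histBest, histPaid]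
  have hH := openedHist_eq_none_or_eq_some π t n (h := fun _ => none) (fun _ => Or.inl rfl)
  have hbest : ⨆ i, (openedHist π t n (fun _ => none) i).getD 0 ≤ 1 :=
    Real.iSup_le (fun i => by rcases hH i with hi | hi <;> simp [hi, ht]) zero_le_one
  have hpaid : 0 ≤ ∑ i, if (openedHist π t n (fun _ => none) i).isSome then c i else 0 :=
    sum_nonneg fun i _ => by split_ifs <;> simp [hc i]
  linarith

end Policies

lemma update_update_self_of_eq {ι α : Type*} [DecidableEq ι] {b : ι → α} {i : ι} {β : α}
    (hb : b i = β) (β' : α) : Function.update (Function.update b i β') i β = b := by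
  rw [Function.update_idem, ← hb, Function.update_eq_self]

section Conditioning

variable {ι : Type*} [Fintype ι] [DecidableEq ι]

def prodWeightOff (p : ι → ℝ) (i : ι) (b : ι → Bool) : ℝ :=
  ∏ j ∈ univ.erase i, bernWeight (p j) (b j)

lemma prodWeight_eq_mul_prodWeightOff (p : ι → ℝ) (i : ι) (b : ι → Bool) :
    prodWeight p b = bernWeight (p i) (b i) * prodWeightOff p i b :=
  (mul_prod_erase _ (fun j => bernWeight (p j) (b j)) (mem_univ i)).symm

lemma prodWeightOff_update (p : ι → ℝ) (i : ι) (b : ι → Bool) (β : Bool) :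
    prodWeightOff p i (Function.update b i β) = prodWeightOff p i b :=
  prod_congr rfl fun j hj => by rw [Function.update_of_ne (ne_of_mem_erase hj)]

lemma prodWeightOff_congr {p q : ι → ℝ} {i : ι} (hpq : ∀ j ≠ i, p j = q j) (b : ι → Bool) :
    prodWeightOff p i b = prodWeightOff q i b :=
  prod_congr rfl fun j hj => by rw [hpq j (ne_of_mem_erase hj)]

lemma sum_prodWeight_mul (p : ι → ℝ) (i : ι) (f : (ι → Bool) → ℝ) :
    ∑ b, prodWeight p b * f b
      = ∑ b ∈ univ.filter (fun b : ι → Bool => b i = false),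
          prodWeightOff p i b * ((1 - p i) * f b + p i * f (Function.update b i true)) := by
  rw [← sum_filter_add_sum_filter_not univ (fun b : ι → Bool => b i = false)]
  have hflip : ∑ b ∈ univ.filter (fun b : ι → Bool => ¬ b i = false), prodWeight p b * f b
      = ∑ b ∈ univ.filter (fun b : ι → Bool => b i = false),
          prodWeight p (Function.update b i true) * f (Function.update b i true) := by
    refine sum_nbij' (fun b => Function.update b i false) (fun b => Function.update b i true)
      (by simp) (by simp) (fun b hb => ?_) (fun b hb => ?_) (fun b hb => ?_)
    all_goals simp only [mem_filter, mem_univ, true_and, Bool.not_eq_false] at hb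
    · exact update_update_self_of_eq hb _
    · exact update_update_self_of_eq hb _
    · rw [update_update_self_of_eq hb]
  rw [hflip, ← sum_add_distrib]
  refine sum_congr rfl fun b hb => ?_
  rw [mem_filter] at hb
  rw [prodWeight_eq_mul_prodWeightOff p i, prodWeight_eq_mul_prodWeightOff p i,
    prodWeightOff_update, hb.2, Function.update_self]
  simp only [bernWeight, Bool.false_eq_true, if_false, if_true]
  ring

lemma sum_prodWeight_mul_of_update {p : ι → ℝ} {i : ι} {f : (ι → Bool) → ℝ}
    (hf : ∀ b, f (Function.update b i true) = f b) :
    ∑ b, prodWeight p b * f b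
      = ∑ b ∈ univ.filter (fun b : ι → Bool => b i = false), prodWeightOff p i b * f b := by
  rw [sum_prodWeight_mul]
  exact sum_congr rfl fun b _ => by rw [hf]; ring

lemma sum_prodWeightOff (p : ι → ℝ) (i : ι) :
    ∑ b ∈ univ.filter (fun b : ι → Bool => b i = false), prodWeightOff p i b = 1 := by
  simpa [sum_prodWeight] using
    (sum_prodWeight_mul_of_update (p := p) (i := i) (f := fun _ => 1) fun _ => rfl).symm

end Conditioning

section OpeningProbability

variable {n N : ℕ} {p q : Fin n → ℝ}

def openProb (p : Fin n → ℝ) (π : (Fin n → Option ℝ) → Option (Fin n)) (i : Fin n) : ℝ :=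
  ∑ b, prodWeight p b * if opened π (bits b) i then 1 else 0

lemma ite_opened_update (π : (Fin n → Option ℝ) → Option (Fin n)) (i : Fin n)
    (b : Fin n → Bool) (β : Bool) :
    (if opened π (bits (Function.update b i β)) i then (1 : ℝ) else 0)
      = if opened π (bits b) i then 1 else 0 := by
  rw [bits_update, opened_update_self]

lemma openProb_nonneg (hp : ∀ i, p i ∈ Set.Icc (0 : ℝ) 1)
    (π : (Fin n → Option ℝ) → Option (Fin n)) (i : Fin n) : 0 ≤ openProb p π i :=
  sum_nonneg fun b _ => mul_nonneg (prodWeight_nonneg hp b) (by split_ifs <;> norm_num)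

lemma openProb_le_one (hp : ∀ i, p i ∈ Set.Icc (0 : ℝ) 1)
    (π : (Fin n → Option ℝ) → Option (Fin n)) (i : Fin n) : openProb p π i ≤ 1 := by
  refine (sum_le_sum fun b _ => ?_).trans_eq (sum_prodWeight p)
  exact mul_le_of_le_one_right (prodWeight_nonneg hp b) (by split_ifs <;> norm_num)

lemma openProb_congr {i : Fin n} (hpq : ∀ j ≠ i, p j = q j)
    (π : (Fin n → Option ℝ) → Option (Fin n)) : openProb p π i = openProb q π i := by
  rw [openProb, openProb, sum_prodWeight_mul_of_update (ite_opened_update π i · true),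
    sum_prodWeight_mul_of_update (ite_opened_update π i · true)]
  simp_rw [prodWeightOff_congr hpq]

lemma sum_prodWeight_mul_opened (p : Fin n → ℝ) (π : (Fin n → Option ℝ) → Option (Fin n))
    (i : Fin n) (a : ℝ) :
    ∑ b, prodWeight p b * ((if opened π (bits b) i then 1 else 0) * (bit (b i) - a))
      = (p i - a) * openProb p π i := by
  rw [sum_prodWeight_mul p i, openProb,
    sum_prodWeight_mul_of_update (ite_opened_update π i · true), mul_sum]
  refine sum_congr rfl fun b hb => ?_
  rw [mem_filter] at hb
  rw [ite_opened_update, Function.update_self, hb.2]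
  simp only [bit, if_true, Bool.false_eq_true, if_false]
  ring

/-- A policy gains `p i - c i` in expectation exactly when it opens box `i`. -/
lemma expected_runPolicy_le (hp : ∀ i, p i ∈ Set.Icc (0 : ℝ) 1)
    (π : (Fin n → Option ℝ) → Option (Fin n)) (c : Fin n → ℝ) :
    ∑ b, prodWeight p b * runPolicy π c (bits b) ≤ ∑ i, (p i - c i) * openProb p π i := by
  calc ∑ b, prodWeight p b * runPolicy π c (bits b)
      ≤ ∑ b, prodWeight p b * ∑ i, (if opened π (bits b) i then 1 else 0) * (bit (b i) - c i) := by
        refine sum_le_sum fun b _ => mul_le_mul_of_nonneg_left ?_ (prodWeight_nonneg hp b)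
        refine (runPolicy_le_sum_opened π c (bits b) fun j => bit_nonneg _).trans_eq ?_
        exact sum_congr rfl fun i _ => by split_ifs <;> simp [bits]
    _ = ∑ i, (p i - c i) * openProb p π i := by
        simp_rw [mul_sum]
        rw [sum_comm]
        exact sum_congr rfl fun i _ => sum_prodWeight_mul_opened p π i (c i)

/-- The probability that the policy learned from `N` samples opens box `i`. -/
def avgOpenProb (p : Fin n → ℝ)
    (P : (Fin N → Fin n → ℝ) → ((Fin n → Option ℝ) → Option (Fin n))) (i : Fin n) : ℝ :=
  ∑ S : Fin N → Fin n → Bool, sampleWeight p S * openProb p (P fun k => bits (S k)) i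

lemma expected_learner_le (hp : ∀ i, p i ∈ Set.Icc (0 : ℝ) 1)
    (P : (Fin N → Fin n → ℝ) → ((Fin n → Option ℝ) → Option (Fin n))) (c : Fin n → ℝ) :
    ∑ S : Fin N → Fin n → Bool, sampleWeight p S *
        ∑ b, prodWeight p b * runPolicy (P fun k => bits (S k)) c (bits b)
      ≤ ∑ i, (p i - c i) * avgOpenProb p P i := by
  calc _ ≤ ∑ S : Fin N → Fin n → Bool, sampleWeight p S *
          ∑ i, (p i - c i) * openProb p (P fun k => bits (S k)) i :=
        sum_le_sum fun S _ => mul_le_mul_of_nonneg_left (expected_runPolicy_le hp _ c)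
          (sampleWeight_nonneg hp S)
    _ = _ := by
        simp_rw [avgOpenProb, mul_sum]
        rw [sum_comm]
        exact sum_congr rfl fun i _ => sum_congr rfl fun S _ => by ring

lemma avgOpenProb_nonneg (hp : ∀ i, p i ∈ Set.Icc (0 : ℝ) 1)
    (P : (Fin N → Fin n → ℝ) → ((Fin n → Option ℝ) → Option (Fin n))) (i : Fin n) :
    0 ≤ avgOpenProb p P i :=
  sum_nonneg fun S _ => mul_nonneg (sampleWeight_nonneg hp S) (openProb_nonneg hp _ i)

lemma avgOpenProb_le_one (hp : ∀ i, p i ∈ Set.Icc (0 : ℝ) 1)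
    (P : (Fin N → Fin n → ℝ) → ((Fin n → Option ℝ) → Option (Fin n))) (i : Fin n) :
    avgOpenProb p P i ≤ 1 := by
  rw [avgOpenProb, ← sum_sampleWeight (N := N) p]
  exact sum_le_sum fun S _ =>
    mul_le_of_le_one_right (sampleWeight_nonneg hp S) (openProb_le_one hp _ i)

/-- Changing the law of box `i` alone affects `avgOpenProb · P i` only through the samples. -/
lemma avgOpenProb_sub_le (hp : ∀ i, p i ∈ Set.Icc (0 : ℝ) 1) {i : Fin n}
    (hpq : ∀ j ≠ i, p j = q j)
    (P : (Fin N → Fin n → ℝ) → ((Fin n → Option ℝ) → Option (Fin n))) :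
    avgOpenProb p P i - avgOpenProb q P i
      ≤ ∑ S : Fin N → Fin n → Bool, |sampleWeight p S - sampleWeight q S| := by
  rw [avgOpenProb, avgOpenProb, ← sum_sub_distrib]
  refine sum_le_sum fun S _ => ?_
  rw [← openProb_congr hpq, ← sub_mul]
  exact (mul_le_mul_of_nonneg_right (le_abs_self _) (openProb_nonneg hp _ i)).trans
    (mul_le_of_le_one_right (abs_nonneg _) (openProb_le_one hp _ i))

end OpeningProbability

section Counting

variable {ι : Type*} [Fintype ι] [DecidableEq ι]

def numTrue (v : ι → Bool) : ℕ := (univ.filter fun i => v i = true).card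

lemma numTrue_update_true {v : ι → Bool} {i : ι} (hvi : v i = false) :
    numTrue (Function.update v i true) = numTrue v + 1 := by
  have : (univ.filter fun j => Function.update v i true j = true)
      = insert i (univ.filter fun j => v j = true) := by
    ext j
    rcases eq_or_ne j i with rfl | hne <;> simp [Function.update_of_ne, *]
  rw [numTrue, this, card_insert_of_notMem (by simp [hvi]), numTrue]

lemma numTrue_update_false {v : ι → Bool} {i : ι} (hvi : v i = true) :
    numTrue (Function.update v i false) + 1 = numTrue v := by
  rw [← numTrue_update_true (Function.update_self i false v), Function.update_idem,
    Function.update_eq_self_iff.2 hvi.symm]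

lemma card_numTrue_eq (m : ℕ) :
    (univ.filter fun v : ι → Bool => numTrue v = m).card = (Fintype.card ι).choose m := by
  rw [← card_univ, ← card_powersetCard]
  refine card_nbij' (fun v => univ.filter fun i => v i = true) (fun s i => decide (i ∈ s))
    (fun v hv => ?_) (fun s hs => ?_) (fun v _ => ?_) (fun s _ => ?_)
  · simpa [numTrue] using (mem_filter.1 hv).2
  · rw [mem_coe, mem_filter]
    simpa [numTrue] using (mem_powersetCard.1 hs).2
  · funext i; simp
  · ext i; simp

lemma card_numTrue_le_succ {m : ℕ} (hm : 2 * m + 1 ≤ Fintype.card ι) :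
    (univ.filter fun v : ι → Bool => numTrue v = m).card
      ≤ (univ.filter fun v : ι → Bool => numTrue v = m + 1).card := by
  rw [card_numTrue_eq, card_numTrue_eq]
  refine Nat.le_of_mul_le_mul_right ?_ (Nat.succ_pos m)
  rw [Nat.choose_succ_right_eq]
  exact Nat.mul_le_mul_left _ (by omega)

lemma sum_card_numTrue_eq_and (m : ℕ) :
    ∑ i, (univ.filter fun v : ι → Bool => numTrue v = m ∧ v i = true).card
      = m * (univ.filter fun v : ι → Bool => numTrue v = m).card := by
  simp_rw [← filter_filter, card_filter (fun v : ι → Bool => _ = true)]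
  rw [sum_comm, mul_comm, ← smul_eq_mul, ← sum_const]
  refine sum_congr rfl fun v hv => ?_
  rw [← (mem_filter.1 hv).2, numTrue, card_filter]

lemma sum_filter_not_eq_sum_update (m : ℕ) (i : ι) (f : (ι → Bool) → ℝ) :
    ∑ v ∈ (univ.filter fun v : ι → Bool => m ≤ numTrue v).filter (fun v => ¬ v i = true), f v
      = ∑ w ∈ univ.filter (fun w : ι → Bool => w i = true ∧ m + 1 ≤ numTrue w),
          f (Function.update w i false) := by
  refine sum_nbij' (fun v => Function.update v i true) (fun w => Function.update w i false)
    (fun v hv => ?_) (fun w hw => ?_) (fun v hv => ?_) (fun w hw => ?_) (fun v hv => ?_)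
  all_goals simp only [mem_filter, mem_univ, true_and, Bool.not_eq_true] at *
  · have := numTrue_update_true hv.2; simp; omega
  · have := numTrue_update_false hw.1; simp; omega
  · exact update_update_self_of_eq hv.2 _
  · exact update_update_self_of_eq hw.1 _
  · rw [update_update_self_of_eq hv.2]

lemma sum_ite_neg_le {Φ : (ι → Bool) → ι → ℝ} {δ : ℝ} (hδ : 0 ≤ δ) (hΦ : ∀ v i, Φ v i ≤ 1)
    (hflip : ∀ v i, v i = true → Φ v i - Φ (Function.update v i false) i ≤ δ) (m : ℕ) (i : ι) :
    ∑ v ∈ univ.filter (fun v : ι → Bool => m ≤ numTrue v), (if v i then Φ v i else -Φ v i)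
      ≤ (univ.filter fun v : ι → Bool => numTrue v = m ∧ v i = true).card
        + δ * (univ.filter fun v : ι → Bool => m ≤ numTrue v).card := by
  set K := univ.filter fun v : ι → Bool => m ≤ numTrue v
  set T := univ.filter fun v : ι → Bool => v i = true ∧ m + 1 ≤ numTrue v
  set L := univ.filter fun v : ι → Bool => numTrue v = m ∧ v i = true
  have hplus : ∑ v ∈ K.filter (fun v => v i = true), Φ v i
      = ∑ w ∈ T, Φ w i + ∑ w ∈ L, Φ w i := by
    rw [← sum_filter_add_sum_filter_not _ (fun v : ι → Bool => m + 1 ≤ numTrue v)]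
    congr 1 <;> refine sum_congr ?_ fun _ _ => rfl <;> ext w <;>
      simp only [K, T, L, mem_filter, mem_univ, true_and]
    · exact ⟨fun h => ⟨h.1.2, h.2⟩, fun h => ⟨⟨by omega, h.1⟩, h.2⟩⟩
    · exact ⟨fun h => ⟨by omega, h.1.2⟩, fun h => ⟨⟨by omega, h.2⟩, by omega⟩⟩
  have hT : ∑ w ∈ T, (Φ w i - Φ (Function.update w i false) i) ≤ δ * K.card := by
    calc _ ≤ ∑ w ∈ T, δ := sum_le_sum fun w hw => hflip w i (mem_filter.1 hw).2.1
      _ = δ * T.card := by rw [sum_const, nsmul_eq_mul, mul_comm]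
      _ ≤ δ * K.card := by
          gcongr
          exact fun w hw => by simp only [K, T, mem_filter, mem_univ, true_and] at hw ⊢; omega
  have hL : ∑ w ∈ L, Φ w i ≤ L.card := by
    simpa using sum_le_sum fun w (_ : w ∈ L) => hΦ w i
  rw [sum_ite, sum_neg_distrib, sum_filter_not_eq_sum_update m i (Φ · i), hplus]
  rw [sum_sub_distrib] at hT
  linarith

lemma sum_sum_ite_neg_le {Φ : (ι → Bool) → ι → ℝ} {δ : ℝ} (hδ : 0 ≤ δ) (hΦ : ∀ v i, Φ v i ≤ 1)
    (hflip : ∀ v i, v i = true → Φ v i - Φ (Function.update v i false) i ≤ δ) (m : ℕ) :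
    ∑ v ∈ univ.filter (fun v : ι → Bool => m ≤ numTrue v), ∑ i, (if v i then Φ v i else -Φ v i)
      ≤ m * (univ.filter fun v : ι → Bool => numTrue v = m).card
        + Fintype.card ι * δ * (univ.filter fun v : ι → Bool => m ≤ numTrue v).card := by
  rw [sum_comm]
  refine (sum_le_sum fun i _ => sum_ite_neg_le hδ hΦ hflip m i).trans_eq ?_
  rw [sum_add_distrib, ← Nat.cast_sum, sum_card_numTrue_eq_and, sum_const, card_univ, nsmul_eq_mul]
  push_cast
  ring

lemma two_mul_card_numTrue_eq_le {m : ℕ}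
    (hm : 2 * m + 1 ≤ Fintype.card ι) :
    2 * (univ.filter fun v : ι → Bool => numTrue v = m).card
      ≤ (univ.filter fun v : ι → Bool => m ≤ numTrue v).card := by
  have hdisj : Disjoint (univ.filter fun v : ι → Bool => numTrue v = m)
      (univ.filter fun v : ι → Bool => numTrue v = m + 1) :=
    disjoint_filter.2 fun v _ h h' => by omega
  have hsub : (univ.filter fun v : ι → Bool => numTrue v = m)
      ∪ (univ.filter fun v : ι → Bool => numTrue v = m + 1)
      ⊆ univ.filter fun v : ι → Bool => m ≤ numTrue v :=
    union_subset (monotone_filter_right _ fun _ _ h => h.ge)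
      (monotone_filter_right _ fun _ _ h => by omega)
  have := card_le_card hsub
  rw [card_union_of_disjoint hdisj] at this
  have := card_numTrue_le_succ (m := m) hm
  omega

end Counting

section Greedy

variable {n m : ℕ} (L : Fin m → Fin n)

def FoundPrize (h : Fin n → Option ℝ) : Prop := ∃ i, ∃ y : ℝ, h i = some y ∧ 1 ≤ y

open Classical in
/-- Open the boxes `L 0, L 1, …` in turn until a reward `≥ 1` has been seen. -/
def greedy : (Fin n → Option ℝ) → Option (Fin n) := fun h =>
  if hL : ¬ FoundPrize h ∧ (univ.filter fun r : Fin m => h (L r) = none).Nonempty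
  then some (L ((univ.filter fun r : Fin m => h (L r) = none).min' hL.2))
  else none

def zeroHist (j : ℕ) : Fin n → Option ℝ :=
  fun i => if ∃ r : Fin m, (r : ℕ) < j ∧ L r = i then some 0 else none

lemma runPolicyAux_of_eq_none {π : (Fin n → Option ℝ) → Option (Fin n)} {c t : Fin n → ℝ}
    {h : Fin n → Option ℝ} (hπ : π h = none) (fuel : ℕ) :
    runPolicyAux π c t fuel h = histBest h - histPaid c h := by
  cases fuel <;> simp [runPolicyAux, hπ]

lemma not_foundPrize_zeroHist (j : ℕ) : ¬ FoundPrize (zeroHist L j) := by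
  rintro ⟨i, y, hiy, h1y⟩
  simp only [zeroHist] at hiy
  split_ifs at hiy
  cases hiy
  linarith

variable {L}

lemma zeroHist_apply_eq_none_iff (hL : Function.Injective L) (j : ℕ) (r : Fin m) :
    zeroHist L j (L r) = none ↔ j ≤ r := by
  simp only [zeroHist, ite_eq_right_iff, reduceCtorEq, imp_false, not_exists, not_and,
    hL.eq_iff]
  exact ⟨fun h => not_lt.1 fun hr => h r hr rfl, fun h r' hr' hrr' => by subst hrr'; omega⟩

lemma greedy_zeroHist (hL : Function.Injective L) {j : ℕ} (hj : j < m) :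
    greedy L (zeroHist L j) = some (L ⟨j, hj⟩) := by
  have hfil : (univ.filter fun r : Fin m => zeroHist L j (L r) = none)
      = univ.filter fun r : Fin m => j ≤ (r : ℕ) := by
    ext r; simp [zeroHist_apply_eq_none_iff hL]
  have hmem : (⟨j, hj⟩ : Fin m) ∈ univ.filter fun r : Fin m => zeroHist L j (L r) = none := by
    simp [hfil]
  rw [greedy, dif_pos ⟨not_foundPrize_zeroHist L j, ⟨_, hmem⟩⟩]
  congr 2
  refine le_antisymm (min'_le _ _ hmem) (le_min' _ _ _ fun r hr => ?_)
  rw [hfil, mem_filter] at hr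
  exact hr.2

lemma greedy_zeroHist_self (hL : Function.Injective L) : greedy L (zeroHist L m) = none := by
  rw [greedy, dif_neg]
  rintro ⟨-, r, hr⟩
  have := (zeroHist_apply_eq_none_iff hL m r).1 (mem_filter.1 hr).2
  omega

lemma zeroHist_zero : zeroHist L 0 = fun _ => none := by
  funext i
  simp [zeroHist]

lemma update_zeroHist (j : ℕ) (hj : j < m) :
    Function.update (zeroHist L j) (L ⟨j, hj⟩) (some 0) = zeroHist L (j + 1) := by
  funext i
  rcases eq_or_ne i (L ⟨j, hj⟩) with rfl | hne
  · rw [Function.update_self, zeroHist, if_pos ⟨⟨j, hj⟩, Nat.lt_succ_self j, rfl⟩]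
  · rw [Function.update_of_ne hne, zeroHist, zeroHist]
    congr 1
    refine propext ⟨fun ⟨r, hr, hLr⟩ => ⟨r, by omega, hLr⟩, fun ⟨r, hr, hLr⟩ => ⟨r, ?_, hLr⟩⟩
    refine lt_of_le_of_ne (Nat.lt_succ_iff.1 hr) fun hrj => hne ?_
    rw [← hLr, Fin.ext (by exact hrj : (r : ℕ) = (⟨j, hj⟩ : Fin m))]

lemma histBest_zeroHist (j : ℕ) : histBest (zeroHist L j) = 0 := by
  have : (fun i => (zeroHist L j i).getD 0) = fun _ => (0 : ℝ) := by
    funext i; simp only [zeroHist]; split_ifs <;> rfl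
  rw [histBest, this, Real.iSup_const_zero]

lemma histBest_update_zeroHist_one (j : ℕ) (i : Fin n) :
    histBest (Function.update (zeroHist L j) i (some 1)) = 1 := by
  refine le_antisymm (Real.iSup_le (fun i' => ?_) zero_le_one) ?_
  · rcases eq_or_ne i' i with rfl | hne
    · simp
    · rw [Function.update_of_ne hne, zeroHist]; split_ifs <;> norm_num
  · refine le_trans ?_ (le_ciSup (Set.finite_range _).bddAbove i)
    simp

lemma histPaid_update_of_eq_none (c : Fin n → ℝ) {h : Fin n → Option ℝ} {i : Fin n} (x : ℝ)
    (hi : h i = none) : histPaid c (Function.update h i (some x)) = histPaid c h + c i := by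
  simp only [histPaid]
  rw [← sum_erase_add _ _ (mem_univ i), ← sum_erase_add _ _ (mem_univ i)]
  rw [sum_congr rfl fun j hj => by rw [Function.update_of_ne (ne_of_mem_erase hj)]]
  simp [hi]

lemma histPaid_zeroHist_succ (hL : Function.Injective L) (c : ℝ) {j : ℕ} (hj : j < m) :
    histPaid (fun _ => c) (zeroHist L (j + 1)) = histPaid (fun _ => c) (zeroHist L j) + c := by
  rw [← update_zeroHist j hj, histPaid_update_of_eq_none _ _
    ((zeroHist_apply_eq_none_iff hL j _).2 le_rfl)]

end Greedy

section GreedyValue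

variable {n m : ℕ} {L : Fin m → Fin n} {p : Fin n → ℝ} {q c : ℝ}

lemma greedy_of_foundPrize (L : Fin m → Fin n) {h : Fin n → Option ℝ} (hh : FoundPrize h) :
    greedy L h = none := by
  rw [greedy, dif_neg]
  exact fun h' => h'.1 hh

lemma runPolicyAux_greedy_zeroHist (hL : Function.Injective L) {j : ℕ} (hj : j < m)
    (c t : Fin n → ℝ) (fuel : ℕ) :
    runPolicyAux (greedy L) c t (fuel + 1) (zeroHist L j)
      = runPolicyAux (greedy L) c t fuel
          (Function.update (zeroHist L j) (L ⟨j, hj⟩) (some (t (L ⟨j, hj⟩)))) := by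
  simp [runPolicyAux, greedy_zeroHist hL hj, (zeroHist_apply_eq_none_iff hL j ⟨j, hj⟩).2 le_rfl]

lemma runPolicyAux_greedy_update_one (L : Fin m → Fin n) (c t : Fin n → ℝ) (fuel j : ℕ)
    {i : Fin n} (hi : zeroHist L j i = none) :
    runPolicyAux (greedy L) c t fuel (Function.update (zeroHist L j) i (some 1))
      = 1 - (histPaid c (zeroHist L j) + c i) := by
  rw [runPolicyAux_of_eq_none (greedy_of_foundPrize L ⟨i, 1, by simp, le_rfl⟩),
    histBest_update_zeroHist_one, histPaid_update_of_eq_none _ _ hi]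

def greedyValueFrom (p : Fin n → ℝ) (c : ℝ) (L : Fin m → Fin n) (j : ℕ) : ℝ :=
  ∑ b, prodWeight p b * runPolicyAux (greedy L) (fun _ => c) (bits b) (n - j) (zeroHist L j)

lemma greedyValueFrom_succ (hL : Function.Injective L) (hpL : ∀ r, p (L r) = q) {j : ℕ}
    (hj : j < m) :
    greedyValueFrom p c L j = q * (1 - (histPaid (fun _ => c) (zeroHist L j) + c))
      + (1 - q) * greedyValueFrom p c L (j + 1) := by
  set i₀ := L ⟨j, hj⟩
  have hm : m ≤ n := by simpa using Fintype.card_le_of_injective L hL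
  have hfuel : n - j = n - (j + 1) + 1 := by omega
  have hnone : zeroHist L j i₀ = none := (zeroHist_apply_eq_none_iff hL j _).2 le_rfl
  have hsome : (zeroHist L (j + 1) i₀).isSome := by
    rw [← update_zeroHist j hj, Function.update_self]; rfl
  have hnext : ∀ b, runPolicyAux (greedy L) (fun _ => c) (bits (Function.update b i₀ true))
      (n - (j + 1)) (zeroHist L (j + 1))
        = runPolicyAux (greedy L) (fun _ => c) (bits b) (n - (j + 1)) (zeroHist L (j + 1)) :=
    fun b => by rw [bits_update, runPolicyAux_update_of_isSome _ _ _ _ _ hsome]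
  rw [greedyValueFrom, greedyValueFrom, sum_prodWeight_mul_of_update (f := fun b =>
    runPolicyAux (greedy L) (fun _ => c) (bits b) (n - (j + 1)) (zeroHist L (j + 1))) hnext, hfuel]
  simp_rw [runPolicyAux_greedy_zeroHist hL hj]
  rw [sum_prodWeight_mul p i₀]
  set X := 1 - (histPaid (fun _ => c) (zeroHist L j) + c)
  calc _ = ∑ b ∈ univ.filter (fun b : Fin n → Bool => b i₀ = false), (q * X * prodWeightOff p i₀ b
        + (1 - q) * (prodWeightOff p i₀ b * runPolicyAux (greedy L) (fun _ => c) (bits b)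
          (n - (j + 1)) (zeroHist L (j + 1)))) := by
        refine sum_congr rfl fun b hb => ?_
        have hone : bits (Function.update b i₀ true) i₀ = 1 := by simp [bits, bit]
        have hzero : bits b i₀ = 0 := by simp [bits, bit, (mem_filter.1 hb).2]
        rw [hone, runPolicyAux_greedy_update_one L _ _ _ _ hnone, hzero, update_zeroHist j hj,
          hpL]
        ring
    _ = _ := by rw [sum_add_distrib, ← mul_sum, ← mul_sum, sum_prodWeightOff, mul_one]

lemma greedyValueFrom_self (hL : Function.Injective L) :
    greedyValueFrom p c L m = -histPaid (fun _ => c) (zeroHist L m) := by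
  simp_rw [greedyValueFrom, runPolicyAux_of_eq_none (greedy_zeroHist_self hL),
    histBest_zeroHist, ← sum_mul, sum_prodWeight]
  ring

lemma greedyValueFrom_eq (hL : Function.Injective L) (hpL : ∀ r, p (L r) = q) (hq : q ≠ 0)
    (d : ℕ) {j : ℕ} (hjd : j + d = m) :
    greedyValueFrom p c L j
      = (1 - (1 - q) ^ d) * (1 - c / q) - histPaid (fun _ => c) (zeroHist L j) := by
  induction d generalizing j with
  | zero =>
    obtain rfl : j = m := hjd
    rw [greedyValueFrom_self hL]
    ring
  | succ d ih =>
    have hj : j < m := by omega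
    rw [greedyValueFrom_succ hL hpL hj, ih (by omega), histPaid_zeroHist_succ hL c hj]
    field_simp
    ring

lemma integral_runPolicy_greedy (hp : ∀ i, p i ∈ Set.Icc (0 : ℝ) 1)
    (hL : Function.Injective L) (hpL : ∀ r, p (L r) = q) (hq : q ≠ 0) :
    ∫ t, runPolicy (greedy L) (fun _ => c) t ∂(Measure.pi fun i => bernR (p i))
      = (1 - (1 - q) ^ m) * (1 - c / q) := by
  have h := greedyValueFrom_eq (c := c) hL hpL hq m (zero_add m)
  rw [zeroHist_zero, greedyValueFrom, Nat.sub_zero, zeroHist_zero] at h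
  rw [integral_pi_bernR hp]
  simpa [runPolicy, histPaid] using h

end GreedyValue

lemma integral_runPolicy_le_pandoraOpt {n : ℕ} {p : Fin n → ℝ}
    (hp : ∀ i, p i ∈ Set.Icc (0 : ℝ) 1) {c : Fin n → ℝ} (hc : ∀ i, 0 ≤ c i)
    (π : (Fin n → Option ℝ) → Option (Fin n)) :
    ∫ t, runPolicy π c t ∂(Measure.pi fun i => bernR (p i))
      ≤ pandoraOpt (fun i => bernR (p i)) c := by
  refine le_ciSup (f := fun π => ∫ t, runPolicy π c t ∂(Measure.pi fun i => bernR (p i)))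
    ⟨1, ?_⟩ π
  rintro _ ⟨π', rfl⟩
  simp only [integral_pi_bernR hp]
  exact (sum_le_sum fun b _ => mul_le_of_le_one_right (prodWeight_nonneg hp b)
    (runPolicy_le_one π' hc fun j => bit_le_one _)).trans_eq (sum_prodWeight p)

/-- `(1 - q)^m ≤ (1 + q)^(-m) ≤ 1 / (1 + m q)`. -/
lemma two_thirds_mul_le_one_sub_pow {q : ℝ} {m : ℕ} (hq0 : 0 ≤ q) (hq1 : q ≤ 1)
    (hmq : m * q ≤ 1 / 2) : 2 / 3 * (m * q) ≤ 1 - (1 - q) ^ m := by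
  have hmq0 : 0 ≤ m * q := by positivity
  have hbase : 1 - q ≤ 1 / (1 + q) := by
    rw [le_div_iff₀ (by linarith)]
    nlinarith
  have hbernoulli : 1 + m * q ≤ (1 + q) ^ m := one_add_mul_le_pow (by linarith) m
  have hpow : (1 - q) ^ m ≤ 1 / (1 + m * q) :=
    calc (1 - q) ^ m ≤ (1 / (1 + q)) ^ m := pow_le_pow_left₀ (by linarith) hbase m
      _ = 1 / (1 + q) ^ m := by rw [div_pow, one_pow]
      _ ≤ 1 / (1 + m * q) := one_div_le_one_div_of_le (by positivity) hbernoulli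
  have hfrac : 2 / 3 * (m * q) ≤ 1 - 1 / (1 + m * q) := by
    rw [one_sub_div (by positivity), add_sub_cancel_left, le_div_iff₀ (by positivity)]
    nlinarith
  linarith

section HardInstance

variable {n N : ℕ} {ε : ℝ}

def hardProb (n : ℕ) (ε : ℝ) (u : Bool) : ℝ := (1 + if u then ε else -ε) / n

lemma hardBox_eq (v : Fin n → Bool) : hardBox n ε v = fun i => bernR (hardProb n ε (v i)) := rfl

lemma hardProb_mem_Icc (hε : ε ∈ Set.Ioo (0 : ℝ) 1) (hn : 3 ≤ n) (u : Bool) :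
    hardProb n ε u ∈ Set.Icc (0 : ℝ) 1 := by
  have hn' : (3 : ℝ) ≤ n := by exact_mod_cast hn
  obtain ⟨hε0, hε1⟩ := hε
  constructor
  · cases u <;> simp only [hardProb] <;> split_ifs <;> exact div_nonneg (by linarith) n.cast_nonneg
  · rw [hardProb, div_le_one (by linarith)]
    cases u <;> simp <;> linarith

lemma hardProb_sub_one_div (u : Bool) :
    hardProb n ε u - 1 / n = (if u then ε else -ε) / n := by
  rw [hardProb]; ring

lemma sq_sum_abs_sampleWeight_sub_le (hε : ε ∈ Set.Ioo (0 : ℝ) 1) (hn : 3 ≤ n) (N : ℕ)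
    {v v' : Fin n → Bool} {i : Fin n} (hvv' : ∀ j ≠ i, v j = v' j) (hvi : v i = true)
    (hv'i : v' i = false) :
    (∑ S : Fin N → Fin n → Bool, |sampleWeight (fun j => hardProb n ε (v j)) S
        - sampleWeight (fun j => hardProb n ε (v' j)) S|) ^ 2 ≤ 12 * N * ε ^ 2 / n := by
  have hp := fun j => hardProb_mem_Icc hε hn (v j)
  have hp' := fun j => hardProb_mem_Icc hε hn (v' j)
  set A := bernAffinity (hardProb n ε true) (hardProb n ε false)
  have hB : ∑ S : Fin N → Fin n → Bool, √(sampleWeight (fun j => hardProb n ε (v j)) S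
      * sampleWeight (fun j => hardProb n ε (v' j)) S) = A ^ N := by
    rw [sum_sqrt_sampleWeight_mul hp hp',
      sum_sqrt_prodWeight_mul hp hp' (i := i) fun j hj => by rw [hvv' j hj], hvi, hv'i]
  have hA0 : 0 ≤ A := bernAffinity_nonneg _ _
  have hA1 : A ≤ 1 := bernAffinity_le_one (hardProb_mem_Icc hε hn _) (hardProb_mem_Icc hε hn _)
  have hn' : (3 : ℝ) ≤ n := by exact_mod_cast hn
  have hA : 1 - A ≤ 3 / 2 * ε ^ 2 * (1 / n) := by
    have hprob : ∀ u : Bool, hardProb n ε u = (1 + if u then ε else -ε) * (1 / n) := fun u => by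
      rw [hardProb, mul_one_div]
    simp only [A, hprob, if_true, Bool.false_eq_true, if_false, ← sub_eq_add_neg]
    exact one_sub_bernAffinity_le ⟨hε.1.le, hε.2.le⟩ (by positivity)
      (by rw [div_le_div_iff₀ (by linarith) (by norm_num)]; linarith)
  have hbernoulli : 1 - (A ^ N) ^ 2 ≤ 2 * N * (1 - A) := by
    have := one_add_mul_le_pow (show (-2 : ℝ) ≤ A - 1 by linarith) (2 * N)
    rw [← pow_mul, mul_comm N 2]
    rw [add_sub_cancel] at this
    push_cast at this
    linarith
  calc _ ≤ 4 * (1 - (A ^ N) ^ 2) := by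
        rw [← hB]
        exact sq_sum_abs_sub_le (sampleWeight_nonneg hp) (sampleWeight_nonneg hp')
          (sum_sampleWeight _) (sum_sampleWeight _)
    _ ≤ 4 * (2 * N * (3 / 2 * ε ^ 2 * (1 / n))) := by
        gcongr
        exact hbernoulli.trans (by gcongr)
    _ = 12 * N * ε ^ 2 / n := by ring

lemma le_pandoraOpt_hardBox (hε : ε ∈ Set.Ioo (0 : ℝ) 1) (hn : 3 ≤ n) {v : Fin n → Bool}
    {m : ℕ} (hm : m ≤ numTrue v) (hmp : m * hardProb n ε true ≤ 1 / 2) :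
    2 / 3 * (m / n) * ε ≤ pandoraOpt (hardBox n ε v) (fun _ => 1 / n) := by
  obtain ⟨s, hs, hsm⟩ := exists_subset_card_eq hm
  set L := s.orderEmbOfFin hsm
  have hpL : ∀ r, hardProb n ε (v (L r)) = hardProb n ε true := fun r => by
    rw [(mem_filter.1 (hs (s.orderEmbOfFin_mem hsm r))).2]
  have hp := fun i => hardProb_mem_Icc hε hn (v i)
  set q := hardProb n ε true
  have hn0 : (0 : ℝ) < n := by exact_mod_cast (by omega : 0 < n)
  have hq : q = (1 + ε) / n := by simp [q, hardProb]
  have hq0 : 0 < q := by rw [hq]; exact div_pos (by linarith [hε.1]) hn0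
  rw [hardBox_eq]
  refine le_trans ?_ (integral_runPolicy_le_pandoraOpt hp (fun _ => by positivity) (greedy L))
  rw [integral_runPolicy_greedy hp L.injective hpL hq0.ne']
  have h1ε : 1 + ε ≠ 0 := by linarith [hε.1]
  have hgain : 1 - 1 / n / q = ε / (1 + ε) := by
    rw [hq]
    field_simp
    ring
  rw [hgain]
  calc 2 / 3 * (m / n) * ε = 2 / 3 * (m * q) * (ε / (1 + ε)) := by
        rw [hq]; field_simp
    _ ≤ (1 - (1 - q) ^ m) * (ε / (1 + ε)) :=
        mul_le_mul_of_nonneg_right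
          (two_thirds_mul_le_one_sub_pow hq0.le (hardProb_mem_Icc hε hn true).2 hmp)
          (div_nonneg hε.1.le (by linarith [hε.1]))

lemma integral_learner_hardBox_le (hε : ε ∈ Set.Ioo (0 : ℝ) 1) (hn : 3 ≤ n)
    (P : (Fin N → Fin n → ℝ) → ((Fin n → Option ℝ) → Option (Fin n))) (v : Fin n → Bool) :
    ∫ s, ∫ t, runPolicy (P s) (fun _ => 1 / n) t ∂(Measure.pi (hardBox n ε v))
        ∂(samples N (hardBox n ε v))
      ≤ ε / n * ∑ i, if v i then avgOpenProb (fun j => hardProb n ε (v j)) P i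
          else -avgOpenProb (fun j => hardProb n ε (v j)) P i := by
  have hp := fun j => hardProb_mem_Icc hε hn (v j)
  rw [hardBox_eq, integral_samples_bernR hp]
  simp_rw [integral_pi_bernR hp]
  refine (expected_learner_le hp P _).trans_eq ?_
  rw [mul_sum]
  refine sum_congr rfl fun i _ => ?_
  rw [hardProb_sub_one_div]
  split_ifs <;> ring

lemma avgOpenProb_hardProb_sub_le (hε : ε ∈ Set.Ioo (0 : ℝ) 1) (hn : 3 ≤ n)
    (hN : 12 * N * ε ^ 2 / n ≤ 1 / 10000)
    (P : (Fin N → Fin n → ℝ) → ((Fin n → Option ℝ) → Option (Fin n))) {v : Fin n → Bool}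
    {i : Fin n} (hvi : v i = true) :
    avgOpenProb (fun j => hardProb n ε (v j)) P i
      - avgOpenProb (fun j => hardProb n ε (Function.update v i false j)) P i ≤ 1 / 100 := by
  have hvv' : ∀ j ≠ i, v j = Function.update v i false j := fun j hj => by
    rw [Function.update_of_ne hj]
  have htv := sq_sum_abs_sampleWeight_sub_le hε hn N hvv' hvi (Function.update_self i false v)
  have htv0 : 0 ≤ ∑ S : Fin N → Fin n → Bool, |sampleWeight (fun j => hardProb n ε (v j)) S
      - sampleWeight (fun j => hardProb n ε (Function.update v i false j)) S| :=
    sum_nonneg fun _ _ => abs_nonneg _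
  have := avgOpenProb_sub_le (fun j => hardProb_mem_Icc hε hn (v j))
    (fun j hj => by rw [hvv' j hj]) P
  nlinarith

lemma sum_integral_learner_hardBox_le (hε : ε ∈ Set.Ioo (0 : ℝ) 1) (hn : 3 ≤ n)
    (hN : 12 * N * ε ^ 2 / n ≤ 1 / 10000) (m : ℕ)
    (P : (Fin N → Fin n → ℝ) → ((Fin n → Option ℝ) → Option (Fin n))) :
    ∑ v ∈ univ.filter (fun v : Fin n → Bool => m ≤ numTrue v),
        ∫ s, ∫ t, runPolicy (P s) (fun _ => 1 / n) t ∂(Measure.pi (hardBox n ε v))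
          ∂(samples N (hardBox n ε v))
      ≤ ε / n * (m * (univ.filter fun v : Fin n → Bool => numTrue v = m).card)
        + ε / 100 * (univ.filter fun v : Fin n → Bool => m ≤ numTrue v).card := by
  have hn0 : (n : ℝ) ≠ 0 := by exact_mod_cast (by omega : n ≠ 0)
  refine (sum_le_sum fun v _ => integral_learner_hardBox_le hε hn P v).trans ?_
  rw [← mul_sum]
  refine (mul_le_mul_of_nonneg_left (sum_sum_ite_neg_le (by norm_num : (0 : ℝ) ≤ 1 / 100)
    (fun v i => avgOpenProb_le_one (fun j => hardProb_mem_Icc hε hn (v j)) P i)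
    (fun v i hvi => avgOpenProb_hardProb_sub_le hε hn hN P hvi) m)
    (div_nonneg hε.1.le n.cast_nonneg)).trans_eq ?_
  rw [Fintype.card_fin]
  field_simp

lemma three_le_of_one_add_div_lt_half (hn : 1 ≤ n) (hε : 0 ≤ ε)
    (hh : (1 + ε) / n < 1 / 2) : 3 ≤ n := by
  have hn0 : (0 : ℝ) < n := by exact_mod_cast hn
  rw [div_lt_div_iff₀ hn0 (by norm_num)] at hh
  have : (2 : ℝ) < n := by linarith
  exact_mod_cast this

lemma level_mul_hardProb_le (hε : ε ∈ Set.Ioo (0 : ℝ) 1) (hn : 3 ≤ n)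
    (hh : (1 + ε) / n < 1 / 2) : (((n + 7) / 8 : ℕ) : ℝ) * hardProb n ε true ≤ 1 / 2 := by
  have hprob : hardProb n ε true = (1 + ε) / n := by simp [hardProb]
  rw [hprob]
  rcases Nat.lt_or_ge n 9 with hn9 | hn9
  · rw [show (n + 7) / 8 = 1 by omega, Nat.cast_one, one_mul]
    exact hh.le
  · have hn0 : (0 : ℝ) < n := by exact_mod_cast (by omega : 0 < n)
    have hm : ((((n + 7) / 8 : ℕ) : ℝ)) * 8 ≤ n + 7 := by
      exact_mod_cast Nat.div_mul_le_self (n + 7) 8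
    have hn9' : (9 : ℝ) ≤ n := by exact_mod_cast hn9
    rw [← mul_div_assoc, div_le_iff₀ hn0]
    nlinarith [hε.2, Nat.cast_nonneg (α := ℝ) ((n + 7) / 8)]

end HardInstance

lemma learner_gain_le_greedy_gain {ε m n L K : ℝ} (hε : 0 ≤ ε) (hmn : 1 / 8 ≤ m / n)
    (hLK : 2 * L ≤ K) (hK : 0 ≤ K) :
    ε / n * (m * L) + ε / 100 * K ≤ K * (2 / 3 * (m / n) * ε - 1 / 200 * ε) := by
  rw [show ε / n * (m * L) = ε * (m / n) * L by ring]
  nlinarith [mul_le_mul_of_nonneg_left hLK (mul_nonneg hε (by linarith : (0 : ℝ) ≤ m / n)),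
    mul_nonneg (sub_nonneg.2 hmn) (mul_nonneg hε hK), mul_nonneg hε hK]

/-- A non-integrable instance qualifies because its Bochner integral is `0`. -/
lemma exists_integral_le_of_forall_sum_le {Ω κ : Type*} [MeasurableSpace Ω] {PΩ : Measure Ω}
    [IsProbabilityMeasure PΩ] {K : Finset κ} (hK : K.Nonempty) {G : Ω → κ → ℝ} {b : κ → ℝ}
    (hb : ∀ v ∈ K, 0 ≤ b v) (hG : ∀ ω, ∑ v ∈ K, G ω v ≤ ∑ v ∈ K, b v) :
    ∃ v ∈ K, ∫ ω, G ω v ∂PΩ ≤ b v := by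
  by_cases hint : ∀ v ∈ K, Integrable (fun ω => G ω v) PΩ
  · refine exists_le_of_sum_le hK ?_
    rw [← integral_finsetSum K hint]
    refine (integral_mono (integrable_finsetSum K hint) (integrable_const _) hG).trans_eq ?_
    simp
  · push Not at hint
    obtain ⟨v, hv, hnot⟩ := hint
    exact ⟨v, hv, (integral_undef hnot).trans_le (hb v hv)⟩

theorem exists_hardBox_integral_le (n : ℕ) (hn : 1 ≤ n) (ε : ℝ) (hε : ε ∈ Set.Ioo (0 : ℝ) 1)
    (hh : (1 + ε) / n < 1 / 2) (N : ℕ) (hN : 12 * N * ε ^ 2 / n ≤ 1 / 10000)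
    (Ω : Type*) [MeasurableSpace Ω] (PΩ : Measure Ω) [IsProbabilityMeasure PΩ]
    (A : Ω → (Fin N → Fin n → ℝ) → ((Fin n → Option ℝ) → Option (Fin n))) :
    ∃ v : Fin n → Bool,
      ∫ ω, ∫ s, ∫ t, runPolicy (A ω s) (fun _ => 1 / n) t ∂(Measure.pi (hardBox n ε v))
          ∂(samples N (hardBox n ε v)) ∂PΩ
        ≤ pandoraOpt (hardBox n ε v) (fun _ => 1 / n) - 1 / 200 * ε := by
  have hn3 := three_le_of_one_add_div_lt_half hn hε.1.le hh
  -- `m ≈ n/8` keeps `m (1 + ε)/n ≤ 1/2` while the greedy gain `(2/3)(m/n) ε` beats `ε/100`.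
  set m := (n + 7) / 8
  set K := univ.filter fun v : Fin n → Bool => m ≤ numTrue v
  have hOpt : ∀ v ∈ K, 2 / 3 * (m / n) * ε ≤ pandoraOpt (hardBox n ε v) (fun _ => 1 / n) :=
    fun v hv => le_pandoraOpt_hardBox hε hn3 (mem_filter.1 hv).2 (level_mul_hardProb_le hε hn3 hh)
  have hmn : (1 : ℝ) / 8 ≤ m / n := by
    rw [div_le_div_iff₀ (by norm_num) (by exact_mod_cast (by omega : 0 < n))]
    have : (n : ℝ) ≤ m * 8 := by exact_mod_cast (by omega : n ≤ m * 8)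
    linarith
  have hlevel : 2 * ((univ.filter fun v : Fin n → Bool => numTrue v = m).card : ℝ) ≤ K.card := by
    exact_mod_cast two_mul_card_numTrue_eq_le (by rw [Fintype.card_fin]; omega)
  have hK : K.Nonempty := ⟨fun _ => true, mem_filter.2 ⟨mem_univ _, by simp [numTrue, m]; omega⟩⟩
  have hsum : ∀ ω, ∑ v ∈ K, ∫ s, ∫ t, runPolicy (A ω s) (fun _ => 1 / n) t
      ∂(Measure.pi (hardBox n ε v)) ∂(samples N (hardBox n ε v))
        ≤ ∑ v ∈ K, (pandoraOpt (hardBox n ε v) (fun _ => 1 / n) - 1 / 200 * ε) := fun ω =>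
    calc _ ≤ ε / n * (m * (univ.filter fun v : Fin n → Bool => numTrue v = m).card)
          + ε / 100 * K.card := sum_integral_learner_hardBox_le hε hn3 hN m (A ω)
      _ ≤ ∑ v ∈ K, (2 / 3 * (m / n) * ε - 1 / 200 * ε) := by
          rw [sum_const, nsmul_eq_mul]
          exact learner_gain_le_greedy_gain hε.1.le hmn hlevel K.card.cast_nonneg
      _ ≤ _ := sum_le_sum fun v hv => by linarith [hOpt v hv]
  obtain ⟨v, -, hv⟩ := exists_integral_le_of_forall_sum_le (PΩ := PΩ) hK
    (fun v hv => by nlinarith [hOpt v hv, hε.1]) hsum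
  exact ⟨v, hv⟩

end

end PandoraSampleLowerBound

theorem stmt17 :
    ∃ c c' : ℝ, 0 < c ∧ 0 < c' ∧
      ∀ n : ℕ, 1 ≤ n →
      ∀ ε : ℝ, ε ∈ Set.Ioo (0 : ℝ) 1 → (1 + ε) / (n : ℝ) < 1 / 2 →
      ∀ N : ℕ, (N : ℝ) ≤ c * (n : ℝ) / ε ^ 2 →
      ∀ (Ω : Type) [MeasurableSpace Ω] (PΩ : Measure Ω) [IsProbabilityMeasure PΩ],
      ∀ A : Ω → (Fin N → Fin n → ℝ) → ((Fin n → Option ℝ) → Option (Fin n)),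
        ∃ v : Fin n → Bool,
          (∫ ω, ∫ s, ∫ t, runPolicy (A ω s) (fun _ => 1 / (n : ℝ)) t
                ∂(Measure.pi (hardBox n ε v))
              ∂(samples N (hardBox n ε v)) ∂PΩ)
            ≤ pandoraOpt (hardBox n ε v) (fun _ => 1 / (n : ℝ)) - c' * ε := by
  refine ⟨1 / 120000, 1 / 200, by norm_num, by norm_num, ?_⟩
  intro n hn ε hε hh N hN Ω _ PΩ _ A
  refine PandoraSampleLowerBound.exists_hardBox_integral_le n hn ε hε hh N ?_ Ω PΩ A
  have hε2 : 0 < ε ^ 2 := pow_pos hε.1 2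
  rw [le_div_iff₀ hε2] at hN
  rw [div_le_iff₀ (by exact_mod_cast (by omega : 0 < n))]
  nlinarith
end
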